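/- arXiv:2211.01893 — 9 statements merged into one kernel-verified Lean document; each statement's English description precedes it below -/
import Mathlib

section
/- For any finite abelian group G of order n and positive integers m ≤ n and h, the minimum size of the h-fold sumset hA over all m-element subsets A of G is at most min over all divisors d of n of (h⌈m/d⌉ - h + 1)·d. -/
open Finset Pointwise

/-- `h`-fold sumset of a finite set. -/
def hsum {G : Type*} [AddCommMonoid G] [DecidableEq G] : ℕ → Finset G → Finset G
  | 0, _ => {0}
  | n + 1, A => A + hsum n A

/-- Every finite abelian group carries an injective, subadditive "mixed-radix valuation"
into `[0, |G|)`. -/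
theorem exists_subadd_val (G : Type*) [AddCommGroup G] [Finite G] :
    ∃ v : G → ℕ, Function.Injective v ∧ (∀ x, v x < Nat.card G) ∧ v 0 = 0 ∧
      ∀ a b, v (a + b) ≤ v a + v b := by
  obtain ⟨ι, hι, nn, hn, ⟨e⟩⟩ := AddCommGroup.equiv_directSum_zmod_of_finite' G
  haveI : ∀ i, NeZero (nn i) := fun i => ⟨by have := hn i; omega⟩
  let e2 : G ≃+ ∀ i, ZMod (nn i) := e.trans (DirectSum.addEquivProd _)
  let σ : Fin (Fintype.card ι) ≃ ι := (Fintype.equivFin ι).symm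
  let N : Fin (Fintype.card ι) → ℕ := fun j => nn (σ j)
  haveI : ∀ j, NeZero (N j) := fun j => ⟨by simp only [N]; have := hn (σ j); omega⟩
  let e3 : G → ∀ j, ZMod (N j) := fun g j => e2 g (σ j)
  have he3inj : Function.Injective e3 := by
    intro a b hab
    apply e2.injective
    funext i
    have h1 := congrFun hab (σ.symm i)
    have hσ : σ (σ.symm i) = i := σ.apply_symm_apply i
    exact hσ ▸ h1
  have he3add : ∀ a b, e3 (a + b) = e3 a + e3 b := by
    intro a b; funext j; simp [e3, map_add]
  have he30 : e3 0 = 0 := by funext j; simp [e3, map_zero]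
  let v : G → ℕ := fun g => (finPiFinEquiv (fun j => (⟨(e3 g j).val, ZMod.val_lt _⟩ : Fin (N j))) : Fin _).val
  have hvformula : ∀ g, v g = ∑ j, (e3 g j).val * ∏ i : Fin j.1, N (Fin.castLE j.isLt.le i) := by
    intro g; exact finPiFinEquiv_apply _
  have hcard : Nat.card G = ∏ j, N j := by
    rw [Nat.card_congr e2.toEquiv, Nat.card_pi]
    simp only [Nat.card_zmod]
    exact (Fintype.prod_equiv σ N nn (fun j => rfl)).symm
  refine ⟨v, ?_, ?_, ?_, ?_⟩
  · intro a b hab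
    apply he3inj
    funext j
    have h1 : (fun j => (⟨(e3 a j).val, ZMod.val_lt _⟩ : Fin (N j)))
        = fun j => (⟨(e3 b j).val, ZMod.val_lt _⟩ : Fin (N j)) :=
      finPiFinEquiv.injective (Fin.val_injective hab)
    have h2 := congrArg Fin.val (congrFun h1 j)
    exact ZMod.val_injective _ h2
  · intro x
    rw [hcard]
    exact (finPiFinEquiv _).isLt
  · rw [hvformula]
    simp [he30]
  · intro a b
    rw [hvformula, hvformula, hvformula]
    calc ∑ j, (e3 (a + b) j).val * ∏ i : Fin j.1, N (Fin.castLE j.isLt.le i)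
        ≤ ∑ j, ((e3 a j).val + (e3 b j).val) * ∏ i : Fin j.1, N (Fin.castLE j.isLt.le i) := by
          refine Finset.sum_le_sum fun j _ => Nat.mul_le_mul_right _ ?_
          rw [he3add]
          exact ZMod.val_add_le _ _
      _ = _ := by simp [add_mul, Finset.sum_add_distrib]

/-- Converse of Lagrange's theorem for finite abelian groups. -/
theorem exists_addSubgroup_card_eq :
    ∀ (d : ℕ) (G : Type u) [AddCommGroup G] [Finite G], d ∣ Nat.card G →
      ∃ H : AddSubgroup G, Nat.card H = d := by
  intro d
  induction d using Nat.strong_induction_on with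
  | _ d ih =>
    intro G _ _ hd
    rcases eq_or_ne d 1 with rfl | hd1
    · exact ⟨⊥, by simp⟩
    have hpos : 0 < Nat.card G := Nat.card_pos
    have hd0 : d ≠ 0 := by
      rintro rfl
      rw [Nat.zero_dvd] at hd
      omega
    obtain ⟨p, hp, hpd⟩ := Nat.exists_prime_and_dvd hd1
    haveI : Fact p.Prime := ⟨hp⟩
    haveI : Fintype G := Fintype.ofFinite G
    obtain ⟨x, hx⟩ := exists_prime_addOrderOf_dvd_card (G := G) p
      (by rw [← Nat.card_eq_fintype_card]; exact hpd.trans hd)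
    obtain ⟨d', rfl⟩ := hpd
    set K := AddSubgroup.zmultiples x
    have hK : Nat.card K = p := (Nat.card_zmultiples x).trans hx
    have hcard : Nat.card G = Nat.card (G ⧸ K) * p := by
      rw [AddSubgroup.card_eq_card_quotient_mul_card_addSubgroup K, hK]
    have hppos : 0 < p := hp.pos
    have hdvd' : d' ∣ Nat.card (G ⧸ K) := by
      obtain ⟨c, hc⟩ := hd
      refine ⟨c, ?_⟩
      have h5 : Nat.card (G ⧸ K) * p = (d' * c) * p := by
        rw [← hcard, hc]
        ring
      exact Nat.eq_of_mul_eq_mul_right hppos h5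
    have hlt : d' < p * d' := by
      have hd'0 : d' ≠ 0 := by rintro rfl; omega
      have := hp.one_lt
      calc d' = 1 * d' := (Nat.one_mul d').symm
        _ < p * d' := by
          exact (Nat.mul_lt_mul_right (Nat.pos_of_ne_zero hd'0)).mpr this
    obtain ⟨H', hH'⟩ := ih d' hlt (G ⧸ K) hdvd'
    refine ⟨AddSubgroup.comap (QuotientAddGroup.mk' K) H', ?_⟩
    have hset : ((AddSubgroup.comap (QuotientAddGroup.mk' K) H' : AddSubgroup G) : Set G)
        = QuotientAddGroup.mk ⁻¹' (H' : Set (G ⧸ K)) := rfl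
    calc Nat.card (AddSubgroup.comap (QuotientAddGroup.mk' K) H')
        = Nat.card (QuotientAddGroup.mk ⁻¹' (H' : Set (G ⧸ K))) := by
          exact Nat.card_congr (Equiv.setCongr hset)
      _ = Nat.card (↥K × ↥(H' : Set (G ⧸ K))) :=
          Nat.card_congr (QuotientAddGroup.preimageMkEquivAddSubgroupProdSet K _)
      _ = p * d' := by
          have hH'' : Nat.card (↥((H' : Set (G ⧸ K)))) = d' := hH'
          rw [Nat.card_prod, hK, hH'']

/-- In any finite abelian group of order `q`, for `1 ≤ k ≤ q` there is a `k`-set whose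
`h`-fold sumset has at most `h(k-1)+1` elements. -/
theorem key_lemma (Q : Type*) [AddCommGroup Q] [Fintype Q] [DecidableEq Q] (h k : ℕ)
    (hkq : k ≤ Fintype.card Q) :
    ∃ S : Finset Q, S.card = k ∧ (hsum h S).card ≤ h * (k - 1) + 1 := by
  classical
  obtain ⟨v, hvi, hvlt, hv0, hvadd⟩ := exists_subadd_val Q
  have hvlt' : ∀ x, v x < Fintype.card Q := by
    intro x; have := hvlt x; rwa [Nat.card_eq_fintype_card] at this
  have hsurj : ∀ y, y < Fintype.card Q → ∃ x : Q, v x = y := by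
    intro y hy
    let w : Q → Fin (Fintype.card Q) := fun x => ⟨v x, hvlt' x⟩
    have hw : Function.Injective w := fun a b hab => hvi (congrArg Fin.val hab)
    have hw2 : Function.Surjective w :=
      ((Fintype.bijective_iff_injective_and_card w).mpr ⟨hw, by simp⟩).2
    obtain ⟨x, hx⟩ := hw2 ⟨y, hy⟩
    exact ⟨x, congrArg Fin.val hx⟩
  set S := univ.filter (fun x => v x < k) with hSdef
  have hScard : S.card = k := by
    have himg : S.image v = Finset.range k := by
      ext y
      simp only [hSdef, Finset.mem_image, Finset.mem_filter, Finset.mem_univ, true_and,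
        Finset.mem_range]
      constructor
      · rintro ⟨x, hx, rfl⟩; exact hx
      · intro hy
        obtain ⟨x, hx⟩ := hsurj y (lt_of_lt_of_le hy hkq)
        exact ⟨x, by omega, hx⟩
    calc S.card = (S.image v).card := (Finset.card_image_of_injective S hvi).symm
      _ = k := by rw [himg, Finset.card_range]
  have hmem : ∀ j (x : Q), x ∈ hsum j S → v x ≤ j * (k - 1) := by
    intro j
    induction j with
    | zero =>
      intro x hx
      rw [hsum, Finset.mem_singleton] at hx
      subst hx
      simp [hv0]
    | succ n ihn =>
      intro x hx
      rw [hsum] at hx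
      obtain ⟨a, ha, b, hb, rfl⟩ := Finset.mem_add.mp hx
      have h1 : v a < k := (Finset.mem_filter.mp ha).2
      have h2 := ihn b hb
      have h3 := hvadd a b
      have h4 : (n + 1) * (k - 1) = n * (k - 1) + (k - 1) := by ring
      omega
  refine ⟨S, hScard, ?_⟩
  have hsub : hsum h S ⊆ univ.filter (fun x => v x ≤ h * (k - 1)) := fun x hx =>
    Finset.mem_filter.mpr ⟨Finset.mem_univ x, hmem h x hx⟩
  calc (hsum h S).card ≤ (univ.filter (fun x => v x ≤ h * (k - 1))).card :=
        Finset.card_le_card hsub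
    _ = ((univ.filter (fun x => v x ≤ h * (k - 1))).image v).card :=
        (Finset.card_image_of_injective _ hvi).symm
    _ ≤ (Finset.range (h * (k - 1) + 1)).card := by
        refine Finset.card_le_card ?_
        intro y hy
        simp only [Finset.mem_image, Finset.mem_filter, Finset.mem_univ, true_and] at hy
        obtain ⟨x, hx, rfl⟩ := hy
        simp only [Finset.mem_range]
        omega
    _ = h * (k - 1) + 1 := Finset.card_range _

/-- For every finite abelian group of order `n` and every divisor `d` of `n`, there is an
`m`-subset whose `h`-fold sumset has size at most `(h⌈m/d⌉ - h + 1)d`; hence the minimum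
sumset size is at most the minimum of this expression over divisors of `n`. -/
theorem stmt1 {G : Type*} [AddCommGroup G] [Fintype G] [DecidableEq G]
    (n m h : ℕ) (hn : Fintype.card G = n) (hm : 1 ≤ m) (hmn : m ≤ n) (hh : 1 ≤ h) :
    ∀ d : ℕ, d ∣ n → ∃ A : Finset G, A.card = m ∧
      (hsum h A).card ≤ (h * ((m + d - 1) / d) - h + 1) * d := by
  intro d hdn
  have hn' : Nat.card G = n := by rw [Nat.card_eq_fintype_card, hn]
  have hnpos : 0 < n := by omega
  have hdpos : 0 < d := Nat.pos_of_dvd_of_pos hdn hnpos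
  obtain ⟨H, hHcard⟩ := exists_addSubgroup_card_eq d G (hn' ▸ hdn)
  haveI : Fintype (G ⧸ H) := Fintype.ofFinite _
  haveI : DecidableEq (G ⧸ H) := Classical.decEq _
  have hQcard : Fintype.card (G ⧸ H) * d = n := by
    have h1 := AddSubgroup.card_eq_card_quotient_mul_card_addSubgroup H
    rw [hHcard, hn', Nat.card_eq_fintype_card] at h1
    omega
  set k := (m + d - 1) / d with hkdef
  have hk1 : 1 ≤ k := by
    rw [hkdef]
    rw [Nat.le_div_iff_mul_le hdpos]
    omega
  have hkq : k ≤ Fintype.card (G ⧸ H) := by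
    obtain ⟨t, ht⟩ := hdn
    have h1 : m + d - 1 ≤ d * t + (d - 1) := by omega
    have h2 : (d * t + (d - 1)) / d = t := by
      rw [Nat.mul_add_div hdpos, Nat.div_eq_of_lt (by omega)]
      omega
    have h3 : Fintype.card (G ⧸ H) = t := by
      have : Fintype.card (G ⧸ H) * d = d * t := by rw [hQcard, ht]
      have hd' : d ≠ 0 := by omega
      calc Fintype.card (G ⧸ H) = Fintype.card (G ⧸ H) * d / d := by
            rw [Nat.mul_div_cancel _ hdpos]
        _ = d * t / d := by rw [this]
        _ = t := Nat.mul_div_cancel_left t hdpos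
    calc k ≤ (d * t + (d - 1)) / d := Nat.div_le_div_right h1
      _ = t := h2
      _ = Fintype.card (G ⧸ H) := h3.symm
  obtain ⟨S, hScard, hhS⟩ := key_lemma (G ⧸ H) h k hkq
  set π : G → G ⧸ H := QuotientAddGroup.mk with hπdef
  have fiber : ∀ T : Finset (G ⧸ H),
      (univ.filter (fun x : G => π x ∈ T)).card = T.card * d := by
    intro T
    have h1 : (univ.filter (fun x : G => π x ∈ T)).card = Nat.card {x : G // π x ∈ T} := by
      rw [Nat.card_eq_fintype_card, Fintype.card_subtype]
    have h2 : Nat.card {x : G // π x ∈ T} = Nat.card (↥H × ↥((T : Set (G ⧸ H)))) := by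
      refine Nat.card_congr (Equiv.trans ?_
        (QuotientAddGroup.preimageMkEquivAddSubgroupProdSet H (T : Set (G ⧸ H))))
      exact Equiv.subtypeEquivRight (by intro x; simp [hπdef, Set.mem_preimage])
    have h3 : Nat.card (↥H × ↥((T : Set (G ⧸ H)))) = d * T.card := by
      rw [Nat.card_prod, hHcard, Nat.card_coe_set_eq, Set.ncard_coe_finset]
    rw [h1, h2, h3, Nat.mul_comm]
  have hA'card : (univ.filter (fun x : G => π x ∈ S)).card = k * d := by
    rw [fiber, hScard]
  have hmA' : m ≤ k * d := by
    have hstep : (m - 1 + d) / d = (m - 1) / d + 1 := Nat.add_div_right _ hdpos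
    have hlt : (m - 1) / d < k := by
      have hmd : m + d - 1 = m - 1 + d := by omega
      rw [hkdef, hmd, hstep]
      omega
    have := (Nat.div_lt_iff_lt_mul hdpos).mp hlt
    omega
  obtain ⟨A, hAsub, hAcard⟩ := Finset.exists_subset_card_eq (hA'card ▸ hmA')
  refine ⟨A, hAcard, ?_⟩
  have hπmem : ∀ j (x : G), x ∈ hsum j A → π x ∈ hsum j S := by
    intro j
    induction j with
    | zero =>
      intro x hx
      rw [hsum, Finset.mem_singleton] at hx
      subst hx
      rw [hsum, Finset.mem_singleton]
      simp [hπdef]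
    | succ jj ih =>
      intro x hx
      rw [hsum] at hx
      obtain ⟨a, ha, b, hb, rfl⟩ := Finset.mem_add.mp hx
      have hπa : π a ∈ S := (Finset.mem_filter.mp (hAsub ha)).2
      have hπab : π (a + b) = π a + π b := rfl
      rw [hsum, hπab]
      exact Finset.add_mem_add hπa (ih b hb)
  have hsubset : hsum h A ⊆ univ.filter (fun x : G => π x ∈ hsum h S) := fun x hx =>
    Finset.mem_filter.mpr ⟨Finset.mem_univ _, hπmem h x hx⟩
  calc (hsum h A).card ≤ (univ.filter (fun x : G => π x ∈ hsum h S)).card :=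
        Finset.card_le_card hsubset
    _ = (hsum h S).card * d := fiber _
    _ ≤ (h * (k - 1) + 1) * d := Nat.mul_le_mul_right d hhS
    _ = (h * k - h + 1) * d := by
        congr 1
        have hgen : ∀ kk : ℕ, 1 ≤ kk → h * (kk - 1) + 1 = h * kk - h + 1 := by
          intro kk hkk
          obtain ⟨k', rfl⟩ := Nat.exists_eq_add_of_le hkk
          simp only [Nat.mul_add, Nat.mul_one, Nat.add_sub_cancel_left]
        exact hgen k hk1
end

section
/- Let n, m, d be positive integers with d dividing n, and write m = cd + k with integers c ≥ 0 and 1 ≤ k ≤ d. Let H be the subgroup of Z/nZ of order d, and let A = (∪_{i=0}^{c-1} (i + H)) ∪ {c + j·(n/d) : 0 ≤ j ≤ k-1} ⊆ Z/nZ. Then for any positive integer h, |hA| = min{n, (h⌈m/d⌉ - h + 1)·d, hm - h + 1}. -/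
open Finset Pointwise

/-- The set of `c` full cosets together with `k` elements of the next coset. -/
def Aset (n d q c k : ℕ) : Finset (ZMod n) :=
  ((Finset.range c ×ˢ Finset.range d).image
      (fun p => ((p.1 : ℕ) : ZMod n) + ((p.2 * q : ℕ) : ZMod n))) ∪
    ((Finset.range k).image (fun j => ((c : ℕ) : ZMod n) + ((j * q : ℕ) : ZMod n)))

lemma mem_Aset {n d q c k : ℕ} {x : ZMod n} :
    x ∈ Aset n d q c k ↔
      (∃ i < c, ∃ j < d, x = ((i + j * q : ℕ) : ZMod n)) ∨
        (∃ j < k, x = ((c + j * q : ℕ) : ZMod n)) := by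
  simp only [Aset, Finset.mem_union, Finset.mem_image, Finset.mem_product, Finset.mem_range,
    Prod.exists]
  constructor
  · rintro (⟨i, j, ⟨hi, hj⟩, rfl⟩ | ⟨j, hj, rfl⟩)
    · exact Or.inl ⟨i, hi, j, hj, by push_cast; ring⟩
    · exact Or.inr ⟨j, hj, by push_cast; ring⟩
  · rintro (⟨i, hi, j, hj, rfl⟩ | ⟨j, hj, rfl⟩)
    · exact Or.inl ⟨i, j, ⟨hi, hj⟩, by push_cast; ring⟩
    · exact Or.inr ⟨j, hj, by push_cast; ring⟩

lemma cast_mod {n d q : ℕ} (hn : n = d * q) (s t : ℕ) :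
    ((s + t * q : ℕ) : ZMod n) = ((s + (t % d) * q : ℕ) : ZMod n) := by
  have h : s + t * q = (s + (t % d) * q) + (t / d) * n := by
    rw [hn]
    conv_lhs => rw [← Nat.div_add_mod t d]
    ring
  rw [h]
  push_cast [ZMod.natCast_self]
  ring

lemma addA {n d q c c' k k' : ℕ} (hn : n = d * q) (hk : 1 ≤ k) (hkd : k ≤ d)
    (hk' : 1 ≤ k') (hk'd : k' ≤ d) :
    Aset n d q c k + Aset n d q c' k' = Aset n d q (c + c') (min (k + k' - 1) d) := by
  have hd : 0 < d := lt_of_lt_of_le hk hkd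
  ext x
  rw [Finset.mem_add]
  simp only [mem_Aset]
  constructor
  · rintro ⟨a, ha, b, hb, rfl⟩
    rcases ha with ⟨i, hi, j, hj, rfl⟩ | ⟨j, hj, rfl⟩ <;>
      rcases hb with ⟨i', hi', j', hj', rfl⟩ | ⟨j', hj', rfl⟩
    · refine Or.inl ⟨i + i', by omega, (j + j') % d, Nat.mod_lt _ hd, ?_⟩
      rw [← Nat.cast_add, show (i + j * q) + (i' + j' * q) = (i + i') + (j + j') * q by ring,
        cast_mod hn]
    · refine Or.inl ⟨i + c', by omega, (j + j') % d, Nat.mod_lt _ hd, ?_⟩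
      rw [← Nat.cast_add, show (i + j * q) + (c' + j' * q) = (i + c') + (j + j') * q by ring,
        cast_mod hn]
    · refine Or.inl ⟨c + i', by omega, (j + j') % d, Nat.mod_lt _ hd, ?_⟩
      rw [← Nat.cast_add, show (c + j * q) + (i' + j' * q) = (c + i') + (j + j') * q by ring,
        cast_mod hn]
    · refine Or.inr ⟨(j + j') % d, ?_, ?_⟩
      · have := Nat.mod_le (j + j') d
        have := Nat.mod_lt (j + j') hd
        omega
      · rw [← Nat.cast_add, show (c + j * q) + (c' + j' * q) = (c + c') + (j + j') * q by ring,
          cast_mod hn]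
  · rintro (⟨s, hs, j, hj, rfl⟩ | ⟨t, ht, rfl⟩)
    · by_cases hsc : s < c
      · by_cases hc' : c' = 0
        · refine ⟨_, Or.inl ⟨s, hsc, j, hj, rfl⟩, _, Or.inr ⟨0, hk', rfl⟩, ?_⟩
          rw [← Nat.cast_add]
          congr 1
          omega
        · refine ⟨_, Or.inl ⟨s, hsc, j, hj, rfl⟩, _, Or.inl ⟨0, by omega, 0, hd, rfl⟩, ?_⟩
          rw [← Nat.cast_add]
          congr 1
          omega
      · refine ⟨_, Or.inr ⟨0, hk, rfl⟩, _, Or.inl ⟨s - c, by omega, j, hj, rfl⟩, ?_⟩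
        rw [← Nat.cast_add]
        congr 1
        have h2 : (c + 0 * q) + ((s - c) + j * q) = (c + (s - c)) + j * q := by ring
        rw [h2]
        omega
    · refine ⟨_, Or.inr ⟨min t (k - 1), by omega, rfl⟩, _,
        Or.inr ⟨t - min t (k - 1), by omega, rfl⟩, ?_⟩
      rw [← Nat.cast_add]
      congr 1
      have h1 : min t (k - 1) + (t - min t (k - 1)) = t := by omega
      calc (c + min t (k - 1) * q) + (c' + (t - min t (k - 1)) * q)
          = (c + c') + (min t (k - 1) + (t - min t (k - 1))) * q := by ring
        _ = (c + c') + t * q := by rw [h1]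

lemma hsumA {n d q c k : ℕ} (hn : n = d * q) (hk : 1 ≤ k) (hkd : k ≤ d) :
    ∀ h : ℕ, 1 ≤ h → hsum h (Aset n d q c k) = Aset n d q (h * c) (min (h * (k - 1) + 1) d)
  | 1, _ => by
    have h0 : hsum 1 (Aset n d q c k) = Aset n d q c k + {0} := rfl
    have h1 : Aset n d q c k + ({0} : Finset (ZMod n)) = Aset n d q c k := by
      ext y
      simp [Finset.mem_add]
    have h2 : 1 * c = c := by omega
    have h3 : min (1 * (k - 1) + 1) d = k := by omega
    rw [h0, h1, h2, h3]
  | (h + 2), _ => by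
    have ih := hsumA (c := c) hn hk hkd (h + 1) (by omega)
    have h0 : hsum (h + 2) (Aset n d q c k)
        = Aset n d q c k + hsum (h + 1) (Aset n d q c k) := rfl
    rw [h0, ih, addA hn hk hkd (by omega) (min_le_right _ _)]
    have e1 : c + (h + 1) * c = (h + 2) * c := by ring
    have e2 : min (k + min ((h + 1) * (k - 1) + 1) d - 1) d
        = min ((h + 2) * (k - 1) + 1) d := by
      have e3 : (h + 2) * (k - 1) = (h + 1) * (k - 1) + (k - 1) := by ring
      omega
    rw [e1, e2]

lemma cardA {n d q c k : ℕ} (hn : n = d * q) (hn0 : 0 < n) (hk : 1 ≤ k) (hkd : k ≤ d) :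
    (Aset n d q c k).card = min n (c * d + k) := by
  haveI : NeZero n := ⟨hn0.ne'⟩
  have hd : 0 < d := lt_of_lt_of_le hk hkd
  have hq : 0 < q := by
    rcases Nat.eq_zero_or_pos q with h | h
    · subst h; simp at hn; omega
    · exact h
  have cast_inj : ∀ a b : ℕ, a < n → b < n → (a : ZMod n) = b → a = b := by
    intro a b ha hb hab
    have h1 := ZMod.val_cast_of_lt ha
    have h2 := ZMod.val_cast_of_lt hb
    rw [hab] at h1
    omega
  have repr_lt : ∀ i j : ℕ, i < q → j < d → i + j * q < n := by
    intro i j hi hj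
    have h1 : j * q ≤ (d - 1) * q := Nat.mul_le_mul_right q (by omega)
    have h2 : (d - 1) * q + 1 * q = ((d - 1) + 1) * q := (add_mul _ _ _).symm
    have h3 : ((d - 1) + 1) = d := by omega
    rw [h3] at h2
    omega
  have inj_lemma : ∀ i j i' j' : ℕ, i < q → j < d → i' < q → j' < d →
      ((i + j * q : ℕ) : ZMod n) = ((i' + j' * q : ℕ) : ZMod n) → i = i' ∧ j = j' := by
    intro i j i' j' hi hj hi' hj' heq
    have h0 := cast_inj _ _ (repr_lt i j hi hj) (repr_lt i' j' hi' hj') heq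
    have h1 : (i + j * q) % q = i := by
      rw [Nat.add_mul_mod_self_right, Nat.mod_eq_of_lt hi]
    have h2 : (i' + j' * q) % q = i' := by
      rw [Nat.add_mul_mod_self_right, Nat.mod_eq_of_lt hi']
    have h3 : i = i' := by rw [← h1, ← h2, h0]
    refine ⟨h3, ?_⟩
    have h4 : j * q = j' * q := by omega
    exact Nat.eq_of_mul_eq_mul_right hq h4
  by_cases hcq : c < q
  · have hset : Aset n d q c k =
        ((Finset.range c ×ˢ Finset.range d) ∪ ({c} ×ˢ Finset.range k)).image
          (fun p : ℕ × ℕ => ((p.1 + p.2 * q : ℕ) : ZMod n)) := by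
      ext x
      rw [mem_Aset]
      simp only [Finset.mem_image, Finset.mem_union, Finset.mem_product, Finset.mem_range,
        Finset.mem_singleton, Prod.exists]
      constructor
      · rintro (⟨i, hi, j, hj, rfl⟩ | ⟨j, hj, rfl⟩)
        · exact ⟨i, j, Or.inl ⟨hi, hj⟩, rfl⟩
        · exact ⟨c, j, Or.inr ⟨rfl, hj⟩, rfl⟩
      · rintro ⟨i, j, (⟨hi, hj⟩ | ⟨rfl, hj⟩), rfl⟩
        · exact Or.inl ⟨i, hi, j, hj, rfl⟩
        · exact Or.inr ⟨j, hj, rfl⟩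
    have hinj : Set.InjOn (fun p : ℕ × ℕ => ((p.1 + p.2 * q : ℕ) : ZMod n))
        (((Finset.range c ×ˢ Finset.range d) ∪ ({c} ×ˢ Finset.range k) : Finset (ℕ × ℕ)) :
          Set (ℕ × ℕ)) := by
      rintro ⟨i, j⟩ hij ⟨i', j'⟩ hij' heq
      simp only [Finset.coe_union, Finset.coe_product, Finset.coe_range, Finset.coe_singleton,
        Set.mem_union, Set.mem_prod, Set.mem_Iio, Set.mem_singleton_iff] at hij hij'
      have hi : i < q := by rcases hij with ⟨h1, _⟩ | ⟨h1, _⟩ <;> omega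
      have hj : j < d := by rcases hij with ⟨_, h1⟩ | ⟨_, h1⟩ <;> omega
      have hi' : i' < q := by rcases hij' with ⟨h1, _⟩ | ⟨h1, _⟩ <;> omega
      have hj' : j' < d := by rcases hij' with ⟨_, h1⟩ | ⟨_, h1⟩ <;> omega
      have := inj_lemma i j i' j' hi hj hi' hj' heq
      exact Prod.ext this.1 this.2
    rw [hset, Finset.card_image_of_injOn hinj,
      Finset.card_union_of_disjoint, Finset.card_product, Finset.card_product]
    · simp only [Finset.card_range, Finset.card_singleton, one_mul]
      have h1 : (c + 1) * d ≤ q * d := Nat.mul_le_mul_right d (by omega)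
      have h2 : (c + 1) * d = c * d + d := by ring
      have h3 : q * d = d * q := mul_comm _ _
      omega
    · rw [Finset.disjoint_left]
      rintro ⟨i, j⟩ hij hij'
      simp only [Finset.mem_product, Finset.mem_range, Finset.mem_singleton] at hij hij'
      omega
  · have hset : Aset n d q c k = Finset.univ := by
      rw [Finset.eq_univ_iff_forall]
      intro x
      rw [mem_Aset]
      left
      refine ⟨x.val % q, by have := Nat.mod_lt x.val hq; omega, x.val / q, ?_, ?_⟩
      · have hlt : x.val < n := ZMod.val_lt x
        rw [Nat.div_lt_iff_lt_mul hq]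
        omega
      · rw [Nat.mod_add_div']
        exact (ZMod.natCast_zmod_val x).symm
    rw [hset, Finset.card_univ, ZMod.card]
    have h1 : q * d ≤ c * d := Nat.mul_le_mul_right d (by omega)
    have h3 : q * d = d * q := mul_comm _ _
    omega

/-- The explicit set consisting of `c` full cosets of the subgroup of order `d` of `ℤ/nℤ`
together with the first `k` elements of the next coset has `h`-fold sumset of size exactly
`min {n, (h⌈m/d⌉ - h + 1)d, hm - h + 1}`. -/
theorem stmt2 (n m d c k h : ℕ) (hn : 0 < n) (hd : d ∣ n) (hk1 : 1 ≤ k) (hkd : k ≤ d)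
    (hm : m = c * d + k) (hh : 1 ≤ h)
    (A : Finset (ZMod n))
    (hA : A = ((Finset.range c ×ˢ Finset.range d).image
          (fun p => ((p.1 : ℕ) : ZMod n) + ((p.2 * (n / d) : ℕ) : ZMod n))) ∪
        ((Finset.range k).image (fun j => ((c : ℕ) : ZMod n) + ((j * (n / d) : ℕ) : ZMod n)))) :
    (hsum h A).card = min n (min ((h * ((m + d - 1) / d) - h + 1) * d) (h * m - h + 1)) := by
  have hd0 : 0 < d := lt_of_lt_of_le hk1 hkd
  have hnq : n = d * (n / d) := (Nat.mul_div_cancel' hd).symm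
  have hAeq : A = Aset n d (n / d) c k := by rw [hA]; rfl
  rw [hAeq, hsumA hnq hk1 hkd h hh,
    cardA hnq hn (by omega : 1 ≤ min (h * (k - 1) + 1) d) (min_le_right _ _)]
  -- ceiling computation
  have hceil : (m + d - 1) / d = c + 1 := by
    have e0 : d * (c + 1) = c * d + d := by ring
    have e : m + d - 1 = (k - 1) + d * (c + 1) := by omega
    rw [e, Nat.add_mul_div_left _ _ hd0, Nat.div_eq_of_lt (by omega)]
    omega
  rw [hceil]
  have g1 : (h * (c + 1) - h + 1) * d = h * c * d + d := by
    have e0 : h * (c + 1) = h * c + h := by ring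
    have e1 : h * (c + 1) - h + 1 = h * c + 1 := by omega
    rw [e1]
    ring
  have g2 : h * m - h + 1 = h * c * d + (h * (k - 1) + 1) := by
    have e0 : h * m = h * c * d + h * k := by rw [hm]; ring
    have e1 : h * k = h * (k - 1) + h := by
      obtain ⟨k', rfl⟩ : ∃ k', k = k' + 1 := ⟨k - 1, by omega⟩
      simp [Nat.mul_succ]
    omega
  omega
end

section
/- A finite abelian 2-group G = Z_2^r admits a perfect restricted 2-basis of size m only if 2^r = 1 + m + C(m,2), equivalently 2^{r+3} - 7 = (2m+1)^2; by the Ramanujan–Nagell theorem, the only possibilities are r ∈ {1, 2, 4, 12}. -/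
open Finset


def aseq : ℕ → ℤ
  | 0 => 2
  | 1 => 1
  | n+2 => aseq (n+1) - 2 * aseq n

def bseq : ℕ → ℤ
  | 0 => 0
  | 1 => 1
  | n+2 => bseq (n+1) - 2 * bseq n

lemma two_b : ∀ n, 2 * bseq (n+1) = aseq n + bseq n := by
  intro n
  induction n using Nat.twoStepInduction with
  | zero => decide
  | one => decide
  | more n ih1 ih2 => simp only [aseq, bseq] at *; ring_nf at *; omega

lemma two_a : ∀ n, 2 * aseq (n+1) = aseq n - 7 * bseq n := by
  intro n
  induction n using Nat.twoStepInduction with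
  | zero => decide
  | one => decide
  | more n ih1 ih2 => simp only [aseq, bseq] at *; ring_nf at *; omega

lemma a_sub_b (n : ℕ) : aseq (n+1) - bseq (n+1) = -4 * bseq n := by
  have h1 := two_a n; have h2 := two_b n; omega

-- parity of squares
lemma sq_parity (z : ℤ) : z ^ 2 % 2 = z % 2 := by
  rcases Int.even_or_odd z with ⟨k, hk⟩ | ⟨k, hk⟩ <;> subst hk <;> ring_nf <;> omega

lemma stepA (n : ℕ) (x y : ℤ) (hy : Odd y)
    (h : x ^ 2 + 7 * y ^ 2 = 2 ^ (n + 4)) (h4 : (4:ℤ) ∣ x - y) :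
    ∃ x' y' : ℤ, Odd x' ∧ Odd y' ∧ x' ^ 2 + 7 * y' ^ 2 = 2 ^ (n + 3) ∧
      2 * y = x' + y' ∧ 2 * x = x' - 7 * y' := by
  obtain ⟨c, hc⟩ := h4
  have hx : x = y + 4 * c := by omega
  subst hx
  have hnorm : (2 * y + c) ^ 2 + 7 * (-c) ^ 2 = 2 ^ (n + 3) := by
    have h2 : (2:ℤ) ^ (n+4) = 2 * 2 ^ (n+3) := by ring
    rw [h2] at h
    nlinarith [h]
  refine ⟨2 * y + c, -c, ?_, ?_, hnorm, by ring, by ring⟩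
  · -- Odd (2y + c) once c odd
    rcases Int.even_or_odd c with ⟨d, hd⟩ | hodd
    · exfalso
      subst hd
      have h8 : ((y + d) ^ 2 + 7 * d ^ 2) * 4 = 2 ^ (n + 3) := by nlinarith [hnorm]
      have h3 : (y + d) ^ 2 + 7 * d ^ 2 = 2 ^ (n + 1) := by
        have : (2:ℤ) ^ (n+3) = (2 ^ (n+1)) * 4 := by ring
        rw [this] at h8
        exact mul_right_cancel₀ (by norm_num) h8
      -- parity: LHS odd, RHS even
      have p1 := sq_parity (y + d)
      have p2 := sq_parity d
      have hyp : y % 2 = 1 := Int.odd_iff.mp hy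
      have hev : (2:ℤ) ^ (n+1) % 2 = 0 := by
        have : (2:ℤ) ^ (n+1) = 2 * 2 ^ n := by ring
        omega
      omega
    · rcases hodd with ⟨d, hd⟩
      exact ⟨y + d, by omega⟩
  · rcases Int.even_or_odd c with ⟨d, hd⟩ | hodd
    · exfalso
      subst hd
      have h8 : ((y + d) ^ 2 + 7 * d ^ 2) * 4 = 2 ^ (n + 3) := by nlinarith [hnorm]
      have h3 : (y + d) ^ 2 + 7 * d ^ 2 = 2 ^ (n + 1) := by
        have : (2:ℤ) ^ (n+3) = (2 ^ (n+1)) * 4 := by ring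
        rw [this] at h8
        exact mul_right_cancel₀ (by norm_num) h8
      have p1 := sq_parity (y + d)
      have p2 := sq_parity d
      have hyp : y % 2 = 1 := Int.odd_iff.mp hy
      have hev : (2:ℤ) ^ (n+1) % 2 = 0 := by
        have : (2:ℤ) ^ (n+1) = 2 * 2 ^ n := by ring
        omega
      omega
    · rcases hodd with ⟨d, hd⟩
      exact ⟨-d - 1, by omega⟩

lemma odd_sq_ge_one (y : ℤ) (hy : Odd y) : 1 ≤ y ^ 2 := by
  have hne : y ≠ 0 := by rcases hy with ⟨k, hk⟩; omega
  have h1 := Int.one_le_abs hne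
  nlinarith [sq_abs y, abs_nonneg y]

lemma combine (k : ℕ) (x y x' y' : ℤ)
    (hx' : x' = aseq (k+1) ∨ x' = -aseq (k+1))
    (hy' : y' = bseq (k+1) ∨ y' = -bseq (k+1))
    (hy : Odd y) (e1 : 2 * y = x' + y') (e2 : 2 * x = x' - 7 * y') :
    (x = aseq (k+2) ∨ x = -aseq (k+2)) ∧ (y = bseq (k+2) ∨ y = -bseq (k+2)) := by
  have ha : 2 * aseq (k+2) = aseq (k+1) - 7 * bseq (k+1) := two_a (k+1)
  have hb : 2 * bseq (k+2) = aseq (k+1) + bseq (k+1) := two_b (k+1)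
  have he := a_sub_b k
  have hyo : y % 2 = 1 := Int.odd_iff.mp hy
  rcases hx' with rfl | rfl <;> rcases hy' with rfl | rfl <;> constructor <;> omega

lemma descent : ∀ n : ℕ, ∀ x y : ℤ, Odd x → Odd y → x ^ 2 + 7 * y ^ 2 = 2 ^ (n + 2) →
    (x = aseq n ∨ x = -aseq n) ∧ (y = bseq n ∨ y = -bseq n) := by
  intro n
  induction n using Nat.twoStepInduction with
  | zero =>
    intro x y hx hy h
    exfalso
    norm_num at h
    have hy1 := odd_sq_ge_one y hy
    nlinarith [sq_nonneg x]
  | one =>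
    intro x y hx hy h
    norm_num at h
    have hy1 := odd_sq_ge_one y hy
    have hx1 := odd_sq_ge_one x hx
    have hy2 : y ^ 2 = 1 := by nlinarith
    have hx2 : x ^ 2 = 1 := by nlinarith
    have h1 : (x - 1) * (x + 1) = 0 := by nlinarith
    have h2 : (y - 1) * (y + 1) = 0 := by nlinarith
    rcases mul_eq_zero.mp h1 with h' | h' <;> rcases mul_eq_zero.mp h2 with h'' | h'' <;>
      simp [aseq, bseq] <;> omega
  | more n _ ih =>
    intro x y hx hy h
    have hxo : x % 2 = 1 := Int.odd_iff.mp hx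
    have hyo : y % 2 = 1 := Int.odd_iff.mp hy
    have h4 : (4:ℤ) ∣ x - y ∨ (4:ℤ) ∣ x + y := by omega
    have hexp : x ^ 2 + 7 * y ^ 2 = 2 ^ (n + 4) := by
      have : n + 2 + 2 = n + 4 := rfl
      rw [← this]; exact h
    rcases h4 with h4 | h4
    · obtain ⟨x', y', hx', hy', hnorm, e1, e2⟩ := stepA n x y hy hexp h4
      have hih := ih x' y' hx' hy' hnorm
      exact combine n x y x' y' hih.1 hih.2 hy e1 e2
    · obtain ⟨x', y', hx', hy', hnorm, e1, e2⟩ := stepA n x (-y) hy.neg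
        (by ring_nf; ring_nf at hexp; linarith) (by omega)
      have hih := ih x' y' hx' hy' hnorm
      have hc := combine n x (-y) x' y' hih.1 hih.2 hy.neg e1 e2
      refine ⟨hc.1, ?_⟩
      rcases hc.2 with h' | h'
      · right; omega
      · left; omega

noncomputable def Sfun (k : ℕ) : ℤ := ∑ j ∈ Finset.range (k+1), (k.choose (2*j+1) : ℤ) * (-7)^j
noncomputable def Rfun (k : ℕ) : ℤ := ∑ j ∈ Finset.range (k+1), (k.choose (2*j) : ℤ) * (-7)^j

lemma Sfun_succ (k : ℕ) : Sfun (k+1) = Rfun k + Sfun k := by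
  unfold Sfun Rfun
  have hsplit : ∀ j, ((k+1).choose (2*j+1) : ℤ) * (-7)^j
      = (k.choose (2*j) : ℤ) * (-7)^j + (k.choose (2*j+1) : ℤ) * (-7)^j := by
    intro j
    rw [Nat.choose_succ_succ k (2*j)]
    push_cast; ring
  rw [Finset.sum_congr rfl (fun j _ => hsplit j), Finset.sum_add_distrib]
  rw [Finset.sum_range_succ, Finset.sum_range_succ (fun j => (k.choose (2*j+1) : ℤ) * (-7)^j)]
  have z1 : (k.choose (2*(k+1)) : ℤ) = 0 := by
    rw [Nat.choose_eq_zero_of_lt (by omega)]; norm_num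
  have z2 : (k.choose (2*(k+1)+1) : ℤ) = 0 := by
    rw [Nat.choose_eq_zero_of_lt (by omega)]; norm_num
  rw [z1, z2]
  ring

lemma Rfun_succ (k : ℕ) : Rfun (k+1) = Rfun k - 7 * Sfun k := by
  unfold Sfun Rfun
  rw [Finset.sum_range_succ']
  have hsplit : ∀ j, (((k+1).choose (2*(j+1)) : ℤ)) * (-7)^(j+1)
      = (k.choose (2*j+1) : ℤ) * (-7)^(j+1) + (k.choose (2*(j+1)) : ℤ) * (-7)^(j+1) := by
    intro j
    have : 2*(j+1) = (2*j+1) + 1 := by ring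
    rw [this, Nat.choose_succ_succ k (2*j+1)]
    push_cast; ring
  rw [Finset.sum_congr rfl (fun j _ => hsplit j), Finset.sum_add_distrib]
  have e1 : ∑ j ∈ Finset.range (k+1), (k.choose (2*j+1) : ℤ) * (-7)^(j+1)
      = -7 * ∑ j ∈ Finset.range (k+1), (k.choose (2*j+1) : ℤ) * (-7)^j := by
    rw [Finset.mul_sum]
    exact Finset.sum_congr rfl (fun j _ => by ring)
  have e2 : ∑ j ∈ Finset.range (k+1), (k.choose (2*(j+1)) : ℤ) * (-7)^(j+1)
      = ∑ j ∈ Finset.range (k+2), (k.choose (2*j) : ℤ) * (-7)^j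
        - (k.choose (2*0) : ℤ) * (-7)^0 := by
    rw [Finset.sum_range_succ' (fun j => (k.choose (2*j) : ℤ) * (-7)^j) (k+1)]
    ring
  rw [e1, e2]
  have z1 : ∑ j ∈ Finset.range (k+2), (k.choose (2*j) : ℤ) * (-7)^j
      = ∑ j ∈ Finset.range (k+1), (k.choose (2*j) : ℤ) * (-7)^j := by
    rw [Finset.sum_range_succ]
    have : (k.choose (2*(k+1)) : ℤ) = 0 := by
      rw [Nat.choose_eq_zero_of_lt (by omega)]; norm_num
    rw [this]; ring
  rw [z1]
  norm_num
  ring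

lemma two_SR : ∀ k, 2 * Sfun k = 2^k * bseq k ∧ 2 * Rfun k = 2^k * aseq k := by
  intro k
  induction k with
  | zero =>
    constructor
    · show 2 * Sfun 0 = 2^0 * bseq 0
      unfold Sfun
      simp [bseq]
    · show 2 * Rfun 0 = 2^0 * aseq 0
      unfold Rfun
      simp [aseq]
  | succ k ih =>
    obtain ⟨hS, hR⟩ := ih
    have hb : 2 * bseq (k+1) = aseq k + bseq k := two_b k
    have ha : 2 * aseq (k+1) = aseq k - 7 * bseq k := two_a k
    constructor
    · rw [Sfun_succ, pow_succ]
      linear_combination hS + hR - (2^k:ℤ) * hb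
    · rw [Rfun_succ, pow_succ]
      linear_combination hR - 7 * hS - (2^k:ℤ) * ha



lemma ordLemma : ∀ l : ℕ, (7:ℤ)^(l+1) ∣ 2^(3*7^l) - 1 := by
  intro l
  induction l with
  | zero => norm_num
  | succ l ih =>
    have hexp : 3 * 7^(l+1) = (3*7^l) * 7 := by ring
    rw [hexp, pow_mul]
    set X : ℤ := 2^(3*7^l) with hX
    have hgeom : (∑ i ∈ Finset.range 7, X^i) * (X - 1) = X^7 - 1 := geom_sum_mul X 7
    have h7X : (7:ℤ) ∣ X - 1 := dvd_trans (dvd_pow_self 7 (Nat.succ_ne_zero l)) ih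
    have h7sum : (7:ℤ) ∣ ∑ i ∈ Finset.range 7, X^i := by
      have he : (∑ i ∈ Finset.range 7, X^i) - 7 = ∑ i ∈ Finset.range 7, (X^i - 1) := by
        rw [Finset.sum_sub_distrib]; norm_num
      have hd : (7:ℤ) ∣ ∑ i ∈ Finset.range 7, (X^i - 1) := by
        apply Finset.dvd_sum
        intro i _
        exact dvd_trans h7X (by simpa using sub_dvd_pow_sub_pow X 1 i)
      omega
    have : (7:ℤ)^(l+2) = 7 * 7^(l+1) := by ring
    rw [this, ← hgeom]
    exact mul_dvd_mul h7sum ih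

lemma Sfun_ext (m N : ℕ) (h : m + 1 ≤ N) :
    Sfun m = ∑ j ∈ Finset.range N, (m.choose (2*j+1) : ℤ) * (-7)^j := by
  unfold Sfun
  apply Finset.sum_subset (Finset.range_subset_range.mpr h)
  intro j _ hj
  rw [Finset.mem_range] at hj
  rw [Nat.choose_eq_zero_of_lt (by omega)]
  norm_num

lemma Sfun_mod7 (k : ℕ) : (7:ℤ) ∣ Sfun k - k := by
  unfold Sfun
  rw [Finset.sum_range_succ']
  have h0 : (k.choose (2*0+1) : ℤ) * (-7)^0 = (k:ℤ) := by simp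
  rw [h0]
  have : ∀ x : ℤ, x + (k:ℤ) - k = x := by intro x; ring
  rw [this]
  apply Finset.dvd_sum
  intro j _
  have : (-7:ℤ)^(j+1) = -7 * (-7)^j := by ring
  rw [this]
  exact Dvd.dvd.mul_left (Dvd.dvd.mul_right (by norm_num) _) _

lemma dvd_choose_diff (k k' c : ℕ) :
    ((k:ℤ) - k') ∣ (c.factorial : ℤ) * ((k.choose c : ℤ) - (k'.choose c : ℤ)) := by
  have h1 : ∀ n : ℕ, (c.factorial : ℤ) * (n.choose c : ℤ) = (descPochhammer ℤ c).eval (n:ℤ) := by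
    intro n
    rw [descPochhammer_eval_eq_descFactorial, Nat.descFactorial_eq_factorial_mul_choose]
    push_cast; ring
  have : (c.factorial : ℤ) * ((k.choose c : ℤ) - (k'.choose c : ℤ))
      = (descPochhammer ℤ c).eval (k:ℤ) - (descPochhammer ℤ c).eval (k':ℤ) := by
    rw [← h1, ← h1]; ring
  rw [this]
  exact Polynomial.sub_dvd_eval_sub _ _ _



lemma val_factorial_bound (i : ℕ) (hi : 1 ≤ i) :
    ((2*i+1).factorial).factorization 7 + 1 ≤ i := by
  haveI : Fact (Nat.Prime 7) := ⟨by norm_num⟩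
  have h := sub_one_mul_padicValNat_factorial (p := 7) (2*i+1)
  have heq : ((2*i+1).factorial).factorization 7 = padicValNat 7 ((2*i+1).factorial) := by
    rw [Nat.factorization_def _ (by norm_num)]
  rw [heq]
  omega

lemma lift_aux (k k' : ℕ) (hlt : k' < k) (h21 : 21 ∣ (k - k'))
    (hk : 2 * Sfun k = -(2^k)) (hk' : 2 * Sfun k' = -(2^k')) : False := by
  have hp7 : Nat.Prime 7 := by norm_num
  set D := k - k' with hD
  have hD0 : D ≠ 0 := by omega
  have h7D : (7:ℕ) ∣ D := dvd_trans (by norm_num) h21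
  set l := D.factorization 7 with hl
  have hlpos : 0 < l := hp7.factorization_pos_of_dvd hD0 h7D
  have h7l : 7^l ∣ D := Nat.ordProj_dvd D 7
  have hnot : ¬ 7^(l+1) ∣ D := Nat.pow_succ_factorization_not_dvd hD0 hp7
  have h3D : 3 ∣ D := dvd_trans (by norm_num) h21
  have h37 : 3 * 7^l ∣ D :=
    Nat.Coprime.mul_dvd_of_dvd_of_dvd (Nat.Coprime.pow_right _ (by norm_num)) h3D h7l
  obtain ⟨c, hc⟩ := h37
  have hkk' : k = k' + 3 * 7^l * c := by omega
  have hDZ : ((k:ℤ) - k') = (D:ℤ) := by omega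
  -- step 1
  have step1 : (7:ℤ)^(l+1) ∣ 2^k - 2^k' := by
    have e : (2:ℤ)^k - 2^k' = 2^k' * ((2^(3*7^l))^c - 1) := by
      rw [hkk', pow_add, pow_mul]; ring
    rw [e]
    apply Dvd.dvd.mul_left
    exact dvd_trans (ordLemma l) (by simpa using sub_dvd_pow_sub_pow ((2:ℤ)^(3*7^l)) 1 c)
  -- step 2
  have hk'ext : Sfun k' = ∑ j ∈ Finset.range (k+1), ((k'.choose (2*j+1):ℤ)) * (-7)^j :=
    Sfun_ext k' (k+1) (by omega)
  have step2 : (7:ℤ)^(l+1) ∣ (Sfun k - Sfun k') - ((k:ℤ) - k') := by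
    have hdiff : Sfun k - Sfun k'
        = ∑ j ∈ Finset.range (k+1), ((k.choose (2*j+1):ℤ) - (k'.choose (2*j+1):ℤ)) * (-7)^j := by
      rw [hk'ext]; unfold Sfun
      rw [← Finset.sum_sub_distrib]
      exact Finset.sum_congr rfl (fun j _ => by ring)
    rw [hdiff, Finset.sum_range_succ']
    have h0 : ((k.choose (2*0+1):ℤ) - (k'.choose (2*0+1):ℤ)) * (-7)^0 = (k:ℤ) - k' := by simp
    rw [h0]
    have e : ∀ x : ℤ, x + ((k:ℤ) - k') - ((k:ℤ) - k') = x := by intro x; ring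
    rw [e]
    apply Finset.dvd_sum
    intro j _
    set i := j + 1 with hi
    by_cases hil : l + 1 ≤ i
    · apply Dvd.dvd.mul_left
      rw [neg_pow]
      exact Dvd.dvd.mul_left (pow_dvd_pow 7 hil) _
    · -- 1 ≤ i ≤ l
      have hi1 : 1 ≤ i := by omega
      have hile : i ≤ l := by omega
      set c2 := 2*(i:ℕ)+1 with hc2
      set v := (c2.factorial).factorization 7 with hv
      have hvb : v + 1 ≤ i := val_factorial_bound i hi1
      have hvle : v ≤ l := by omega
      -- 7^l ∣ (c2! : ℤ) * Δ
      have hdvd1 : (7:ℤ)^l ∣ (c2.factorial : ℤ) * ((k.choose c2 : ℤ) - (k'.choose c2 : ℤ)) := by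
        have : (7:ℤ)^l ∣ (k:ℤ) - k' := by
          rw [hDZ]
          exact_mod_cast Int.natCast_dvd_natCast.mpr h7l
        exact dvd_trans this (dvd_choose_diff k k' c2)
      -- split factorial
      have hfac : (c2.factorial) = 7^v * ((c2.factorial) / 7^v) := (Nat.ordProj_mul_ordCompl_eq_self _ 7).symm
      have hu7 : ¬ (7:ℕ) ∣ ((c2.factorial) / 7^v) := Nat.not_dvd_ordCompl hp7 (Nat.factorial_ne_zero _)
      set u := (c2.factorial) / 7^v with hu
      have hdvd2 : (7:ℤ)^(l-v) ∣ (u:ℤ) * ((k.choose c2 : ℤ) - (k'.choose c2 : ℤ)) := by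
        have h1 : (7:ℤ)^v * 7^(l-v) ∣ 7^v * ((u:ℤ) * ((k.choose c2 : ℤ) - (k'.choose c2 : ℤ))) := by
          rw [← pow_add]
          have : v + (l - v) = l := by omega
          rw [this]
          calc (7:ℤ)^l ∣ (c2.factorial : ℤ) * ((k.choose c2 : ℤ) - (k'.choose c2 : ℤ)) := hdvd1
          _ = 7^v * ((u:ℤ) * ((k.choose c2 : ℤ) - (k'.choose c2 : ℤ))) := by
              rw [show (c2.factorial : ℤ) = (7:ℤ)^v * u by exact_mod_cast congrArg (Nat.cast : ℕ → ℤ) hfac]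
              ring
        exact (mul_dvd_mul_iff_left (by positivity : (7:ℤ)^v ≠ 0)).mp h1
      have hcop : IsCoprime ((7:ℤ)^(l-v)) (u:ℤ) := by
        have hn : Nat.Coprime (7^(l-v)) u :=
          Nat.Coprime.pow_left _ ((Nat.Prime.coprime_iff_not_dvd hp7).mpr hu7)
        have := Nat.isCoprime_iff_coprime.mpr hn
        push_cast at this
        exact this
      have hΔ : (7:ℤ)^(l-v) ∣ ((k.choose c2 : ℤ) - (k'.choose c2 : ℤ)) :=
        hcop.dvd_of_dvd_mul_left hdvd2
      obtain ⟨w, hw⟩ := hΔ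
      have he2 : ((k.choose (2*i+1):ℤ) - (k'.choose (2*i+1):ℤ)) * (-7)^i
          = ((-1)^i * w) * 7^(l-v+i) := by
        rw [show (2*i+1) = c2 from rfl, hw, neg_pow, pow_add]; ring
      rw [he2]
      exact Dvd.dvd.mul_left (pow_dvd_pow 7 (by omega)) _
  -- combine
  have d1 : (7:ℤ)^(l+1) ∣ 2*(Sfun k - Sfun k') := by
    have e : 2*(Sfun k - Sfun k') = -(2^k - 2^k') := by linarith [hk, hk']
    rw [e]
    exact dvd_neg.mpr step1
  have hcomb : (7:ℤ)^(l+1) ∣ 2*((k:ℤ) - k') := by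
    have e : 2*((k:ℤ) - k') = 2*(Sfun k - Sfun k') - 2*((Sfun k - Sfun k') - ((k:ℤ) - k')) := by ring
    rw [e]
    exact dvd_sub d1 (step2.mul_left 2)
  have hcop2 : IsCoprime ((7:ℤ)^(l+1)) (2:ℤ) := by
    have hn : Nat.Coprime (7^(l+1)) 2 := Nat.Coprime.pow_left _ (by norm_num)
    have := Nat.isCoprime_iff_coprime.mpr hn
    push_cast at this
    exact this
  have hfin : (7:ℤ)^(l+1) ∣ ((k:ℤ) - k') := hcop2.dvd_of_dvd_mul_left hcomb
  rw [hDZ] at hfin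
  exact hnot (Int.natCast_dvd_natCast.mp (by exact_mod_cast hfin))


lemma bseq_rec (n : ℕ) : bseq (n+2) = bseq (n+1) - 2 * bseq n := rfl

-- mod 8 behaviour
lemma bseq_mod8 : ∀ n : ℕ, bseq (2*n+3) % 8 = 7 ∧ bseq (2*n+4) % 8 = 5 := by
  intro n
  induction n with
  | zero => decide
  | succ n ih =>
    obtain ⟨h1, h2⟩ := ih
    have e1 : bseq (2*n+5) = bseq (2*n+4) - 2 * bseq (2*n+3) := bseq_rec (2*n+3)
    have e2 : bseq (2*n+6) = bseq (2*n+5) - 2 * bseq (2*n+4) := bseq_rec (2*n+4)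
    constructor
    · show bseq (2*n+5) % 8 = 7
      omega
    · show bseq (2*n+6) % 8 = 5
      omega

example : bseq 13 = -1 := by decide
example : bseq 5 = -1 := by decide
example : bseq 3 = -1 := by decide

lemma residues (t : ℕ) (ht : t < 21) (h : (7:ℤ) ∣ 2*(t:ℤ) + 2^t) : t = 3 ∨ t = 5 ∨ t = 13 := by
  interval_cases t <;> simp_all <;> omega

lemma two_S : ∀ k, 2 * Sfun k = 2^k * bseq k := fun k => (two_SR k).1

lemma neg_case (k : ℕ) (h : bseq k = -1) : k = 3 ∨ k = 5 ∨ k = 13 := by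
  have hSk : 2 * Sfun k = -(2^k) := by rw [two_S k, h]; ring
  have h7 : (7:ℤ) ∣ 2*(k:ℤ) + 2^k := by
    have hd := (Sfun_mod7 k).mul_left 2
    have e : 2*(k:ℤ) + 2^k = -(2 * (Sfun k - (k:ℤ))) := by linear_combination hSk
    rw [e]
    exact hd.neg_right
  obtain ⟨q, t, htlt, hkt⟩ : ∃ q t, t < 21 ∧ k = 21 * q + t :=
    ⟨k / 21, k % 21, Nat.mod_lt _ (by norm_num), (Nat.div_add_mod k 21).symm⟩
  have h7t : (7:ℤ) ∣ 2*(t:ℤ) + 2^t := by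
    have hpow : (2:ℤ)^k = ((2:ℤ)^21)^q * 2^t := by
      rw [hkt, pow_add, pow_mul]
    have hgp : (7:ℤ) ∣ ((2:ℤ)^21)^q - 1 := by
      have h1 : (7:ℤ) ∣ (2:ℤ)^21 - 1 := by norm_num
      exact dvd_trans h1 (by simpa only [one_pow] using sub_dvd_pow_sub_pow ((2:ℤ)^21) 1 q)
    have e : 2*(t:ℤ) + 2^t = (2*(k:ℤ) + 2^k) - (2^t * (((2:ℤ)^21)^q - 1) + 2*((k:ℤ) - t)) := by
      rw [hpow]; ring
    have hkt7 : (7:ℤ) ∣ 2*((k:ℤ) - t) := by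
      have : (k:ℤ) - t = 21 * q := by rw [hkt]; push_cast; ring
      rw [this]
      exact ⟨6*q, by ring⟩
    rw [e]
    exact dvd_sub h7 (dvd_add (hgp.mul_left _) hkt7)
  have hres := residues t htlt h7t
  -- base equations
  have base : ∀ t0 : ℕ, bseq t0 = -1 → 2 * Sfun t0 = -(2^t0) := by
    intro t0 h0
    rw [two_S t0, h0]; ring
  have hknet : k = t ∨ t < k := by omega
  rcases hknet with rfl | hlt
  · omega
  · exfalso
    rcases hres with rfl | rfl | rfl
    · exact lift_aux k 3 hlt (by omega) hSk (base 3 (by decide))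
    · exact lift_aux k 5 hlt (by omega) hSk (base 5 (by decide))
    · exact lift_aux k 13 hlt (by omega) hSk (base 13 (by decide))

lemma bval (k : ℕ) (h : bseq k = 1 ∨ bseq k = -1) :
    k = 1 ∨ k = 2 ∨ k = 3 ∨ k = 5 ∨ k = 13 := by
  rcases h with h | h
  · -- bseq k = 1 : k = 1 or 2
    rcases Nat.lt_or_ge k 3 with hk3 | hk3
    · interval_cases k
      · exact absurd h (by decide)
      · omega
      · omega
    · exfalso
      rcases Nat.even_or_odd k with ⟨n, hn⟩ | ⟨n, hn⟩
      · -- k = 2n = 2(n-2)+4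
        have hn2 : k = 2*(n-2)+4 := by omega
        have := (bseq_mod8 (n-2)).2
        rw [← hn2] at this
        omega
      · have hn2 : k = 2*(n-1)+3 := by omega
        have := (bseq_mod8 (n-1)).1
        rw [← hn2] at this
        omega
  · have h3 := neg_case k h
    omega



/-- If `Z_2^r` has a perfect restricted `2`-basis of size `m ≥ 1`, then
`2^r = 1 + m + C(m,2)`, equivalently `2^{r+3} - 7 = (2m+1)^2`, and hence `r ∈ {1,2,4,12}`. -/
theorem stmt10 (r m : ℕ) (hm : 1 ≤ m) (A : Finset (Fin r → ZMod 2)) (hcard : A.card = m)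
    (hA : ∀ g : Fin r → ZMod 2,
      ∃! S : Finset (Fin r → ZMod 2), S.card ≤ 2 ∧ S ⊆ A ∧ S.sum id = g) :
    2 ^ r = 1 + m + m.choose 2 ∧ 2 ^ (r + 3) - 7 = (2 * m + 1) ^ 2 ∧
      r ∈ ({1, 2, 4, 12} : Set ℕ) := by
  classical
  -- Step 1: counting
  have hcardG : Fintype.card (Fin r → ZMod 2) = 2^r := by
    rw [Fintype.card_fun]
    simp
  set T := A.powerset.filter (fun S => S.card ≤ 2) with hT
  have hbij : T.card = Fintype.card (Fin r → ZMod 2) := by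
    rw [← Finset.card_univ]
    apply Finset.card_bij (fun S _ => S.sum id)
    · intro S hS; exact Finset.mem_univ _
    · intro S1 h1 S2 h2 heq
      rw [hT, Finset.mem_filter, Finset.mem_powerset] at h1 h2
      exact ExistsUnique.unique (hA (S1.sum id)) ⟨h1.2, h1.1, rfl⟩ ⟨h2.2, h2.1, heq.symm⟩
    · intro g _
      obtain ⟨S, ⟨hc, hsub, hsum⟩, -⟩ := hA g
      exact ⟨S, by rw [hT, Finset.mem_filter, Finset.mem_powerset]; exact ⟨hsub, hc⟩, hsum⟩
  have hTeq : T = (Finset.range 3).biUnion (fun i => A.powersetCard i) := by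
    ext S
    simp only [hT, Finset.mem_filter, Finset.mem_powerset, Finset.mem_biUnion, Finset.mem_range,
      Finset.mem_powersetCard]
    constructor
    · rintro ⟨hsub, hc⟩; exact ⟨S.card, by omega, hsub, rfl⟩
    · rintro ⟨i, hi, hsub, hc⟩; exact ⟨hsub, by omega⟩
  have hTcard : T.card = 1 + m + m.choose 2 := by
    rw [hTeq, Finset.card_biUnion]
    · rw [Finset.sum_range_succ, Finset.sum_range_succ, Finset.sum_range_succ,
        Finset.sum_range_zero]
      simp [Finset.card_powersetCard, hcard]
    · intro i hi j hj hij
      apply Finset.disjoint_left.mpr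
      intro S hSi hSj
      rw [Finset.mem_powersetCard] at hSi hSj
      omega
  have h1 : 2^r = 1 + m + m.choose 2 := by rw [← hcardG, ← hbij, hTcard]
  -- Step 2: arithmetic
  obtain ⟨m', rfl⟩ : ∃ m', m = m' + 1 := ⟨m - 1, by omega⟩
  have hc2 : 2 * (m' + 1).choose 2 = (m' + 1) * m' := by
    rw [Nat.choose_two_right]
    simp only [Nat.add_sub_cancel]
    have hev : 2 ∣ (m' + 1) * m' := by
      rcases Nat.even_or_odd m' with ⟨t, ht⟩ | ⟨t, ht⟩
      · exact ⟨(t+t+1)*t, by rw [ht]; ring⟩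
      · exact ⟨(t+1)*(2*t+1), by rw [ht]; ring⟩
    omega
  have h2 : 2^(r+3) = (2*(m'+1)+1)^2 + 7 := by
    have e8 : (2:ℕ)^(r+3) = 8 * 2^r := by ring
    rw [e8, h1]
    zify
    zify at hc2
    linear_combination (4:ℤ) * hc2
  refine ⟨h1, by omega, ?_⟩
  -- Step 3: Ramanujan–Nagell
  set m := m' + 1
  have hx : ((2*m+1 : ℕ) : ℤ) ^ 2 + 7 * 1^2 = 2 ^ ((r+1) + 2) := by
    have := congrArg (Nat.cast : ℕ → ℤ) h2
    push_cast at this ⊢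
    rw [show (r+1)+2 = r+3 from rfl]
    linarith
  have hdes := descent (r+1) ((2*m+1 : ℕ) : ℤ) 1
    ⟨(m:ℤ), by push_cast; ring⟩ ⟨0, by ring⟩ hx
  have hb1 : bseq (r+1) = 1 ∨ bseq (r+1) = -1 := by
    rcases hdes.2 with h | h
    · left; omega
    · right; omega
  have hv := bval (r+1) hb1
  have hr0 : r ≠ 0 := by
    intro hr
    subst hr
    norm_num at h1
    omega
  simp only [Set.mem_insert_iff, Set.mem_singleton_iff]
  omega
end

section
/- The only positive integers m for which 1 + m + m(m-1)/2 is a power of 2 are m = 1, 2, 5, and 90. -/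
namespace RN

def u : ℕ → ℤ
  | 0 => 0
  | 1 => 1
  | (n+2) => u (n+1) - 2 * u n

def v : ℕ → ℤ
  | 0 => 2
  | 1 => 1
  | (n+2) => v (n+1) - 2 * v n

lemma u_rec (n : ℕ) : u (n+2) = u (n+1) - 2 * u n := rfl
lemma v_rec (n : ℕ) : v (n+2) = v (n+1) - 2 * v n := rfl

lemma uv_rel : ∀ n : ℕ, 2 * u (n+1) = u n + v n ∧ 2 * v (n+1) = v n - 7 * u n := by
  intro n
  induction n using Nat.twoStepInduction with
  | zero => decide
  | one => decide
  | more n ih1 ih2 =>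
    obtain ⟨h1, h2⟩ := ih1
    obtain ⟨h3, h4⟩ := ih2
    rw [u_rec, v_rec, u_rec, v_rec]
    constructor <;> linarith

lemma norm_uv : ∀ n : ℕ, v n ^ 2 + 7 * u n ^ 2 = 2 ^ (n + 2) := by
  intro n
  induction n with
  | zero => decide
  | succ n ih =>
    obtain ⟨h1, h2⟩ := uv_rel n
    have h4 : (2 * v (n+1))^2 + 7 * (2 * u (n+1))^2 = 4 * (v (n+1)^2 + 7 * u (n+1)^2) := by ring
    have : (v n - 7 * u n)^2 + 7*(u n + v n)^2 = 8 * (v n ^2 + 7 * u n ^2) := by ring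
    have h5 : 4 * (v (n+1)^2 + 7 * u (n+1)^2) = 8 * 2 ^ (n+2) := by
      rw [← h4, h1, h2, this, ih]
    have : (2:ℤ)^(n+1+2) = 2 * 2^(n+2) := by ring
    linarith

open Finset

noncomputable def S (n : ℕ) : ℤ := ∑ j ∈ range (n+1), (n.choose (2*j+1) : ℤ) * (-7)^j
noncomputable def T (n : ℕ) : ℤ := ∑ j ∈ range (n+1), (n.choose (2*j) : ℤ) * (-7)^j

lemma S_ext {n N : ℕ} (h : n ≤ N) :
    ∑ j ∈ range (N+1), (n.choose (2*j+1) : ℤ) * (-7)^j = S n := by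
  rw [S]
  apply (Finset.sum_subset (by gcongr) ?_).symm
  intro j hj hnj
  simp only [mem_range] at hj hnj
  have : n < 2*j+1 := by omega
  rw [Nat.choose_eq_zero_of_lt this]
  simp

lemma T_ext {n N : ℕ} (h : n ≤ N) :
    ∑ j ∈ range (N+1), (n.choose (2*j) : ℤ) * (-7)^j = T n := by
  rw [T]
  apply (Finset.sum_subset (by gcongr) ?_).symm
  intro j hj hnj
  simp only [mem_range] at hj hnj
  have : n < 2*j := by omega
  rw [Nat.choose_eq_zero_of_lt this]
  simp

lemma S_succ (n : ℕ) : S (n+1) = S n + T n := by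
  have h1 : S (n+1) = ∑ j ∈ range (n+2), ((n.choose (2*j) : ℤ) + (n.choose (2*j+1) : ℤ)) * (-7)^j := by
    rw [S]
    apply Finset.sum_congr rfl
    intro j _
    have : (n+1).choose (2*j+1) = n.choose (2*j) + n.choose (2*j+1) := Nat.choose_succ_succ n (2*j)
    rw [this]
    push_cast
    ring
  rw [h1]
  simp only [add_mul]
  rw [Finset.sum_add_distrib, S_ext (by omega), T_ext (by omega)]
  ring

lemma T_succ (n : ℕ) : T (n+1) = T n - 7 * S n := by
  have h1 : T (n+1) = ∑ j ∈ range (n+1), ((n+1).choose (2*(j+1)) : ℤ) * (-7)^(j+1) + 1 := by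
    rw [T, Finset.sum_range_succ' (fun j => ((n+1).choose (2*j) : ℤ) * (-7)^j)]
    norm_num
  have h2 : ∀ j, ((n+1).choose (2*(j+1)) : ℤ) = (n.choose (2*j+1) : ℤ) + (n.choose (2*j+2) : ℤ) := by
    intro j
    have : (n+1).choose (2*j+2) = n.choose (2*j+1) + n.choose (2*j+2) := Nat.choose_succ_succ n (2*j+1)
    rw [show 2*(j+1) = 2*j+2 by ring, this]
    push_cast; ring
  rw [h1]
  have h3 : ∑ j ∈ range (n+1), ((n+1).choose (2*(j+1)) : ℤ) * (-7)^(j+1)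
      = ∑ j ∈ range (n+1), ((n.choose (2*j+1) : ℤ) * (-7)^(j+1) + (n.choose (2*j+2) : ℤ) * (-7)^(j+1)) := by
    apply Finset.sum_congr rfl
    intro j _
    rw [h2 j]; ring
  rw [h3, Finset.sum_add_distrib]
  have h4 : ∑ j ∈ range (n+1), (n.choose (2*j+1) : ℤ) * (-7)^(j+1) = -7 * S n := by
    rw [S, Finset.mul_sum]
    apply Finset.sum_congr rfl
    intro j _; ring
  have h5 : ∑ j ∈ range (n+1), (n.choose (2*j+2) : ℤ) * (-7)^(j+1) + 1 = T n := by
    have := Finset.sum_range_succ' (fun j => ((n.choose (2*j) : ℤ)) * (-7)^j) n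
    rw [T, this, Finset.sum_range_succ (fun j => ((n.choose (2*j+2)) : ℤ) * (-7)^(j+1)) n,
      Nat.choose_eq_zero_of_lt (show n < 2*n+2 by omega)]
    norm_num
    apply Finset.sum_congr rfl
    intro j _
    rw [show 2*(j+1) = 2*j+2 by ring]
  linarith [h4, h5]

lemma ST_uv : ∀ n : ℕ, 2 * S n = 2^n * u n ∧ 2 * T n = 2^n * v n := by
  intro n
  induction n with
  | zero =>
    constructor
    · simp [S, u]
    · simp [T, v]
  | succ n ih =>
    obtain ⟨h1, h2⟩ := ih
    obtain ⟨h3, h4⟩ := uv_rel n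
    rw [S_succ, T_succ]
    constructor
    · have : (2:ℤ)^(n+1) * u (n+1) = 2^n * (2 * u (n+1)) := by ring
      rw [this, h3]
      linarith
    · have : (2:ℤ)^(n+1) * v (n+1) = 2^n * (2 * v (n+1)) := by ring
      rw [this, h4]
      linarith

lemma u_mod8 : ∀ k : ℕ, u (2*k+3) % 8 = 7 ∧ u (2*k+4) % 8 = 5 := by
  intro k
  induction k with
  | zero => decide
  | succ k ih =>
    obtain ⟨h1, h2⟩ := ih
    have e1 : u (2*k+5) = u (2*k+4) - 2 * u (2*k+3) := u_rec (2*k+3)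
    have e2 : u (2*k+6) = u (2*k+5) - 2 * u (2*k+4) := u_rec (2*k+4)
    show u (2*k+5) % 8 = 7 ∧ u (2*k+6) % 8 = 5
    omega

lemma u_eq_one {n : ℕ} (h : u n = 1) : n = 1 ∨ n = 2 := by
  rcases Nat.lt_or_ge n 3 with h3 | h3
  · interval_cases n
    · exact absurd h (by decide)
    · left; rfl
    · right; rfl
  · exfalso
    rcases Nat.even_or_odd n with he | ho
    · obtain ⟨k, hk⟩ := he
      have := (u_mod8 (k - 2)).2
      rw [show 2*(k-2)+4 = n by omega] at this
      omega
    · obtain ⟨k, hk⟩ := ho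
      have := (u_mod8 (k - 1)).1
      rw [show 2*(k-1)+3 = n by omega] at this
      omega

lemma u_period7 : ∀ n : ℕ, u (n + 21) % 7 = u n % 7 ∧ u (n + 22) % 7 = u (n+1) % 7 := by
  intro n
  induction n with
  | zero => decide
  | succ n ih =>
    obtain ⟨h1, h2⟩ := ih
    have e1 : u (n+23) = u (n+22) - 2 * u (n+21) := u_rec (n+21)
    have e2 : u (n+2) = u (n+1) - 2 * u n := u_rec n
    show u (n+22) % 7 = u (n+1) % 7 ∧ u (n+23) % 7 = u (n+2) % 7
    omega

lemma u_mod7_of_mod21 : ∀ n : ℕ, u n % 7 = u (n % 21) % 7 := by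
  intro n
  induction n using Nat.strong_induction_on with
  | _ n ih =>
    rcases Nat.lt_or_ge n 21 with h | h
    · rw [Nat.mod_eq_of_lt h]
    · have h1 := (u_period7 (n - 21)).1
      rw [show n - 21 + 21 = n by omega] at h1
      rw [h1, ih (n-21) (by omega), show (n-21) % 21 = n % 21 by omega]

lemma u_neg_one_mod21 {n : ℕ} (h : u n = -1) : n % 21 = 3 ∨ n % 21 = 5 ∨ n % 21 = 13 := by
  have h1 := u_mod7_of_mod21 n
  rw [h] at h1
  norm_num at h1
  have h2 : n % 21 < 21 := Nat.mod_lt _ (by norm_num)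
  set r := n % 21 with hr
  interval_cases r <;> revert h1 <;> decide

lemma seven_pow_dvd_base : ∀ k : ℕ, (7:ℤ)^(k+1) ∣ 2^(3 * 7^k) - 1 := by
  intro k
  induction k with
  | zero => norm_num
  | succ k ih =>
    have hX : (2:ℤ)^(3 * 7^(k+1)) = ((2:ℤ)^(3 * 7^k))^7 := by
      rw [← pow_mul, pow_succ]
      ring_nf
    set X : ℤ := (2:ℤ)^(3 * 7^k) with hXdef
    have h7 : (7:ℤ) ∣ X - 1 := dvd_trans (dvd_pow_self 7 (Nat.succ_ne_zero k)) ih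
    have factor : X^7 - 1 = (X - 1) * (X^6 + X^5 + X^4 + X^3 + X^2 + X + 1) := by ring
    have h2 : (7:ℤ) ∣ X^6 + X^5 + X^4 + X^3 + X^2 + X + 1 := by
      have hm : X ≡ 1 [ZMOD 7] := Int.modEq_iff_dvd.2 (by simpa using dvd_neg.2 h7)
      have hsum : X^6 + X^5 + X^4 + X^3 + X^2 + X + 1 ≡ 1^6 + 1^5 + 1^4 + 1^3 + 1^2 + 1 + 1 [ZMOD 7] :=
        ((((((hm.pow 6).add (hm.pow 5)).add (hm.pow 4)).add (hm.pow 3)).add (hm.pow 2)).add hm).add (Int.ModEq.refl 1)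
      have : X^6 + X^5 + X^4 + X^3 + X^2 + X + 1 ≡ 0 [ZMOD 7] := hsum.trans (by decide)
      exact (Int.modEq_zero_iff_dvd).1 this
    rw [hX, factor, pow_succ]
    exact mul_dvd_mul ih h2

lemma lemB {k d : ℕ} (h : 3 * 7^k ∣ d) : (7:ℤ)^(k+1) ∣ 2^d - 1 := by
  obtain ⟨t, ht⟩ := h
  have : (2:ℤ)^d - 1 = ((2:ℤ)^(3*7^k))^t - 1^t := by rw [← pow_mul, ht, one_pow]
  rw [this]
  exact dvd_trans (by simpa using seven_pow_dvd_base k) (sub_dvd_pow_sub_pow _ 1 t)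

lemma seven_pow_ge (e : ℕ) (he : 1 ≤ e) : 2*e + 3 ≤ 7^e := by
  induction e with
  | zero => omega
  | succ e ih =>
    rcases Nat.eq_or_lt_of_le he with h | h
    · simp [← h]
    · have h1 := ih (by omega)
      have h2 : 7^(e+1) = 7 * 7^e := by ring
      omega

lemma choose_dvd {k d q j : ℕ} (hd : 7^k ∣ d) (hq2 : 2 ≤ q) (hqj : q ≤ 2*j+1) (hjk : j ≤ k) :
    7^(k+1-j) ∣ d.choose q := by
  rcases Nat.eq_zero_or_pos d with rfl | hdpos
  · rw [Nat.choose_eq_zero_of_lt (by omega)]; exact dvd_zero _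
  haveI : Fact (Nat.Prime 7) := ⟨by norm_num⟩
  set e := padicValNat 7 q with he
  have hq0 : q ≠ 0 := by omega
  have h7e : 7^e ∣ q := pow_padicValNat_dvd
  have h7e1 : ¬ 7^(e+1) ∣ q := pow_succ_padicValNat_not_dvd hq0
  have hej : e + 1 ≤ j := by
    rcases Nat.eq_zero_or_pos e with he0 | he1
    · omega
    · have h1 := seven_pow_ge e he1
      have h2 : 7^e ≤ q := Nat.le_of_dvd (by omega) h7e
      omega
  have key : d * (d-1).choose (q-1) = d.choose q * q := by
    have := Nat.add_one_mul_choose_eq (d-1) (q-1)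
    rw [show d - 1 + 1 = d by omega, show q - 1 + 1 = q by omega] at this
    exact this
  have hdvd : 7^k ∣ d.choose q * q := key ▸ (Dvd.dvd.mul_right hd _)
  obtain ⟨q0, hq0eq⟩ := h7e
  have hq0nd : ¬ (7 ∣ q0) := by
    intro ⟨c, hc⟩
    exact h7e1 ⟨c, by rw [hq0eq, hc]; ring⟩
  have hek : e ≤ k := by omega
  have hsplit : 7^k = 7^e * 7^(k-e) := by rw [← pow_add]; congr 1; omega
  have hdvd' : 7^e * 7^(k-e) ∣ d.choose q * (7^e * q0) := by
    rw [← hq0eq, ← hsplit]; exact hdvd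
  have hdvd2 : 7^(k-e) ∣ d.choose q * q0 := by
    have h1 : 7^e * 7^(k-e) ∣ 7^e * (d.choose q * q0) := by
      rw [show 7^e * (d.choose q * q0) = d.choose q * (7^e * q0) by ring]
      exact hdvd'
    exact (Nat.mul_dvd_mul_iff_left (Nat.pow_pos (n := e) (by norm_num))).1 h1
  have hcop : Nat.Coprime (7^(k-e)) q0 :=
    Nat.Coprime.pow_left _ ((Nat.Prime.coprime_iff_not_dvd (by norm_num)).2 hq0nd)
  have := (Nat.Coprime.dvd_of_dvd_mul_right hcop hdvd2)
  exact dvd_trans (pow_dvd_pow 7 (by omega)) this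

lemma bracket_eq (m d j : ℕ) :
    (m+d).choose (2*j+1)
      = m.choose (2*j+1) + d * m.choose (2*j)
        + ∑ q ∈ range (2*j), d.choose (q+2) * m.choose (2*j-1-q) := by
  have h1 : (m+d).choose (2*j+1) = (d+m).choose (2*j+1) := by rw [Nat.add_comm]
  rw [h1, Nat.add_choose_eq, Finset.Nat.sum_antidiagonal_eq_sum_range_succ_mk]
  rw [Finset.sum_range_succ' (fun q => d.choose q * m.choose (2*j+1-q))]
  rw [Finset.sum_range_succ' (fun q => d.choose (q+1) * m.choose (2*j+1-(q+1)))]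
  simp only [Nat.choose_zero_right, Nat.choose_one_right, one_mul]
  have e1 : 2*j+1-0 = 2*j+1 := by omega
  have e2 : 2*j+1-(0+1) = 2*j := by omega
  rw [e1, e2]
  have e3 : ∀ q, 2*j+1-(q+1+1) = 2*j-1-q := by intro q; omega
  have : ∑ q ∈ range (2*j), d.choose (q+1+1) * m.choose (2*j+1-(q+1+1))
      = ∑ q ∈ range (2*j), d.choose (q+2) * m.choose (2*j-1-q) := by
    apply Finset.sum_congr rfl
    intro q _
    rw [e3 q]
  rw [this, Nat.choose_one_right]
  ring

lemma bracket_dvd {m d j k : ℕ} (hd : 7^k ∣ d) :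
    (7:ℤ)^(k+1) ∣ (((m+d).choose (2*j+1) : ℤ) - (m.choose (2*j+1) : ℤ) - (d:ℤ) * (m.choose (2*j) : ℤ)) * (-7)^j := by
  have hb : ((m+d).choose (2*j+1) : ℤ) - (m.choose (2*j+1) : ℤ) - (d:ℤ) * (m.choose (2*j) : ℤ)
      = ∑ q ∈ range (2*j), (d.choose (q+2) : ℤ) * (m.choose (2*j-1-q) : ℤ) := by
    have := bracket_eq m d j
    push_cast [this]
    ring
  rw [hb]
  rcases Nat.lt_or_ge k j with hkj | hjk
  · apply Dvd.dvd.mul_left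
    have h1 : ((-7):ℤ)^j = (-1)^j * 7^j := by rw [← neg_one_mul, mul_pow]
    rw [h1]
    exact Dvd.dvd.mul_left (pow_dvd_pow (7:ℤ) (by omega)) _
  · have hsum : (7:ℤ)^(k+1-j) ∣ ∑ q ∈ range (2*j), (d.choose (q+2) : ℤ) * (m.choose (2*j-1-q) : ℤ) := by
      apply Finset.dvd_sum
      intro q hq
      simp only [mem_range] at hq
      have h1 : 7^(k+1-j) ∣ d.choose (q+2) :=
        choose_dvd hd (by omega) (by omega) hjk
      exact Dvd.dvd.mul_right (by exact_mod_cast Int.natCast_dvd_natCast.2 h1) _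
    have h2 : (7:ℤ)^j ∣ (-7)^j := by
      rw [show ((-7):ℤ)^j = (-1)^j * 7^j by rw [← neg_one_mul, mul_pow]]
      exact Dvd.dvd.mul_left dvd_rfl _
    have := mul_dvd_mul hsum h2
    rwa [← pow_add, show k+1-j+j = k+1 by omega] at this

lemma key_cong {m d k : ℕ} (hd : 7^k ∣ d) :
    (7:ℤ)^(k+1) ∣ S (m+d) - S m - (d:ℤ) * T m := by
  have hse := S_ext (show m ≤ m + d by omega)
  have hte := T_ext (show m ≤ m + d by omega)
  rw [S, ← hse, ← hte, Finset.mul_sum, ← Finset.sum_sub_distrib, ← Finset.sum_sub_distrib]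
  apply Finset.dvd_sum
  intro j _
  have h := bracket_dvd (m := m) (j := j) hd
  have : ((m+d).choose (2*j+1) : ℤ) * (-7)^j - (m.choose (2*j+1) : ℤ) * (-7)^j
        - (d:ℤ) * ((m.choose (2*j) : ℤ) * (-7)^j)
      = (((m+d).choose (2*j+1) : ℤ) - (m.choose (2*j+1) : ℤ) - (d:ℤ) * (m.choose (2*j) : ℤ)) * (-7)^j := by
    ring
  rw [this]
  exact h

lemma step_lemma {m n : ℕ} (hm1 : 1 ≤ m) (hmn : m ≤ n) (hum : u m = -1) (hun : u n = -1)
    {k : ℕ} (h37 : 3 * 7^k ∣ (n - m)) : 7^(k+1) ∣ (n - m) := by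
  set d := n - m with hd
  have hn : n = m + d := by omega
  have h7k : 7^k ∣ d := dvd_trans (Dvd.intro_left 3 rfl) h37
  have hKC := key_cong (m := m) (d := d) (k := k) h7k
  rw [← hn] at hKC
  obtain ⟨hSn, _⟩ := ST_uv n
  obtain ⟨hSm, hTm⟩ := ST_uv m
  rw [hun] at hSn
  rw [hum] at hSm
  -- 2*(S n - S m - d*T m) = -2^n + 2^m - d*2^m*(v m)
  have h2 : (7:ℤ)^(k+1) ∣ 2 * (S n - S m - (d:ℤ) * T m) := Dvd.dvd.mul_left hKC 2
  have he : 2 * (S n - S m - (d:ℤ) * T m) = -(2^n) + 2^m - (d:ℤ) * (2^m * v m) := by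
    have : 2 * (S n - S m - (d:ℤ) * T m) = 2*S n - 2*S m - (d:ℤ)*(2*T m) := by ring
    rw [this, hSn, hSm, hTm]
    ring
  have hpow : (2:ℤ)^n = 2^m * 2^d := by rw [← pow_add, ← hn]
  have hB : (7:ℤ)^(k+1) ∣ (2:ℤ)^m * (2^d - 1) := Dvd.dvd.mul_left (lemB h37) _
  have h3 : (7:ℤ)^(k+1) ∣ (d:ℤ) * (2^m * v m) := by
    have := dvd_sub (dvd_neg.2 h2) hB
    have he2 : -(2 * (S n - S m - (d:ℤ) * T m)) - (2:ℤ)^m * (2^d - 1) = (d:ℤ) * (2^m * v m) := by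
      rw [he, hpow]; ring
    rwa [he2] at this
  -- 7 does not divide 2^m * v m
  have hp7 : Prime (7:ℤ) := Int.prime_iff_natAbs_prime.mpr (by norm_num)
  have h7v : ¬ (7:ℤ) ∣ v m := by
    intro hdvd
    have hnorm := norm_uv m
    rw [hum] at hnorm
    have : (7:ℤ) ∣ 2^(m+2) := by
      have : (2:ℤ)^(m+2) = v m^2 + 7 := by rw [← hnorm]; ring
      rw [this]
      exact dvd_add (Dvd.dvd.mul_right hdvd (v m) |>.trans (by rw [sq])) (dvd_refl 7)
    have := hp7.dvd_of_dvd_pow this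
    norm_num at this
  have h7x : ¬ (7:ℤ) ∣ (2:ℤ)^m * v m := by
    intro hdvd
    rcases (hp7.dvd_mul.1 hdvd) with h | h
    · have := hp7.dvd_of_dvd_pow h
      norm_num at this
    · exact h7v h
  -- transfer to ℕ
  have hnat : 7^(k+1) ∣ d * ((2:ℤ)^m * v m).natAbs := by
    have := Int.natAbs_dvd_natAbs.2 h3
    rwa [Int.natAbs_mul, Int.natAbs_pow, Int.natAbs_natCast] at this
  have hcop : Nat.Coprime (7^(k+1)) (((2:ℤ)^m * v m).natAbs) := by
    apply Nat.Coprime.pow_left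
    apply (Nat.Prime.coprime_iff_not_dvd (by norm_num)).2
    intro hdvd
    exact h7x (Int.natAbs_dvd_natAbs.1 (by simpa using hdvd))
  exact Nat.Coprime.dvd_of_dvd_mul_right hcop hnat

lemma u_neg_one {n : ℕ} (h : u n = -1) : n = 3 ∨ n = 5 ∨ n = 13 := by
  have hmod := u_neg_one_mod21 h
  rcases Nat.lt_or_ge n 21 with hlt | hge
  · rw [Nat.mod_eq_of_lt hlt] at hmod
    exact hmod
  · exfalso
    -- let m be the matching base solution
    obtain ⟨m, hm1, hm2, hm3⟩ : ∃ m : ℕ, (m = 3 ∨ m = 5 ∨ m = 13) ∧ u m = -1 ∧ n % 21 = m := by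
      rcases hmod with h' | h' | h'
      · exact ⟨3, Or.inl rfl, by decide, h'⟩
      · exact ⟨5, Or.inr (Or.inl rfl), by decide, h'⟩
      · exact ⟨13, Or.inr (Or.inr rfl), by decide, h'⟩
    have hmle : m ≤ n := by omega
    have hm1' : 1 ≤ m := by omega
    set d := n - m with hd
    have hdpos : 0 < d := by omega
    have h21 : 21 ∣ d := by omega
    have h3d : 3 ∣ d := dvd_trans (by norm_num) h21
    have hall : ∀ k : ℕ, 7^k ∣ d := by
      intro k
      induction k with
      | zero => simp
      | succ k ih =>
        have h37 : 3 * 7^k ∣ d :=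
          Nat.Coprime.mul_dvd_of_dvd_of_dvd (Nat.Coprime.pow_right _ (by norm_num)) h3d ih
        exact step_lemma hm1' hmle hm2 h h37
    have := Nat.le_of_dvd hdpos (hall d)
    have hlt2 : d < 7^d := Nat.lt_pow_self (by norm_num)
    omega

-- the real part of α^s
def A : ℕ → ℤ
  | 0 => 1
  | (t+1) => -2 * u t

lemma A_succ (t : ℕ) : A (t+1) = -2 * u t := rfl

lemma u_succ_A : ∀ t : ℕ, u (t+1) = A t + u t := by
  intro t
  cases t with
  | zero => decide
  | succ t =>
    rw [u_rec, A_succ]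
    ring

lemma descent : ∀ (s : ℕ) (x y : ℤ), x^2 + x*y + 2*y^2 = 2^s → ¬(2 ∣ x ∧ 2 ∣ y) →
    (x = A s ∧ y = u s) ∨ (x = -A s ∧ y = -u s) ∨
    (x = A s + u s ∧ y = -u s) ∨ (x = -(A s) - u s ∧ y = u s) := by
  intro s
  induction s with
  | zero =>
    intro x y hN _
    have h4 : (2*x+y)^2 + 7*y^2 = 4 := by nlinarith [hN]
    have hy2 : y^2 = 0 := by nlinarith [sq_nonneg (2*x+y), sq_nonneg y]
    have hy : y = 0 := by
      have := sq_eq_zero_iff.1 hy2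
      exact this
    subst hy
    have hx2 : x^2 = 1 := by nlinarith
    have : (x-1)*(x+1) = 0 := by nlinarith
    rcases mul_eq_zero.1 this with h | h
    · left; constructor
      · show x = A 0; have : x = 1 := by linarith
        simpa [A]
      · simp [u]
    · right; left; constructor
      · show x = -A 0; have : x = -1 := by linarith
        simpa [A]
      · simp [u]
  | succ s ih =>
    intro x y hN hprim
    have hupar : ∀ t : ℕ, (2:ℤ) ∣ A (t+1) := fun t => ⟨-u t, by rw [A_succ]; ring⟩
    have hu0 : u 0 = 0 := rfl
    have hu1 : u 1 = 1 := rfl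
    have hA0 : A 0 = 1 := rfl
    have hA1 : A 1 = 0 := by decide
    have hpow2 : (2:ℤ)^(s+1) = 2 * 2^s := by ring
    by_cases hx : (2:ℤ) ∣ x
    · obtain ⟨a, ha⟩ := hx
      have hyodd : ¬ (2:ℤ) ∣ y := fun hy => hprim ⟨⟨a, ha⟩, hy⟩
      have hw : (y+a)^2 + (y+a)*(-a) + 2*(-a)^2 = 2^s := by
        have h2 : 2 * ((y+a)^2 + (y+a)*(-a) + 2*(-a)^2) = 2 * 2^s := by
          rw [← hpow2, ← hN, ha]; ring
        exact mul_left_cancel₀ two_ne_zero h2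
      have hwprim : ¬((2:ℤ) ∣ (y+a) ∧ (2:ℤ) ∣ (-a)) := by
        rintro ⟨c1, c2⟩
        exact hyodd (by omega)
      rcases ih (y+a) (-a) hw hwprim with ⟨e1,e2⟩|⟨e1,e2⟩|⟨e1,e2⟩|⟨e1,e2⟩
      · left
        constructor
        · rw [ha, A_succ]; linarith
        · rw [u_succ_A]; linarith
      · right; left
        constructor
        · rw [ha, A_succ]; linarith
        · rw [u_succ_A]; linarith
      · rcases s with _ | t
        · simp only [hA0, hu0] at e1 e2
          left
          refine ⟨by rw [ha, hA1]; linarith, by rw [hu1]; linarith⟩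
        · exfalso
          have hy : y = A (t+1) := by linarith
          exact hprim ⟨⟨a, ha⟩, hy ▸ hupar t⟩
      · rcases s with _ | t
        · simp only [hA0, hu0] at e1 e2
          right; left
          refine ⟨by rw [ha, hA1]; linarith, by rw [hu1]; linarith⟩
        · exfalso
          have hy : y = -A (t+1) := by linarith
          have : (2:ℤ) ∣ y := by
            obtain ⟨c, hc⟩ := hupar t
            exact ⟨-c, by rw [hy, hc]; ring⟩
          exact hprim ⟨⟨a, ha⟩, this⟩
    · have hxy : (2:ℤ) ∣ x + y := by
        by_cases hy : (2:ℤ) ∣ y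
        · exfalso
          obtain ⟨b, hb⟩ := hy
          obtain ⟨a, ha⟩ : ∃ a, x = 2*a+1 := ⟨(x-1)/2, by omega⟩
          have hodd : x^2+x*y+2*y^2 = 2*(2*a^2+2*a+2*a*b+b+4*b^2)+1 := by
            rw [ha, hb]; ring
          rw [hN, hpow2] at hodd
          have h2p : (2:ℤ) ∣ 2 * 2^s := ⟨2^s, rfl⟩
          omega
        · omega
      obtain ⟨e, heq⟩ := hxy
      have hxe : x = 2*e - y := by linarith
      have hw : (-y)^2 + (-y)*e + 2*e^2 = 2^s := by
        have h2 : 2 * ((-y)^2 + (-y)*e + 2*e^2) = 2 * 2^s := by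
          rw [← hpow2, ← hN, hxe]; ring
        exact mul_left_cancel₀ two_ne_zero h2
      have hwprim : ¬((2:ℤ) ∣ (-y) ∧ (2:ℤ) ∣ e) := by
        rintro ⟨c1, c2⟩
        exact hx (by omega)
      rcases ih (-y) e hw hwprim with ⟨e1,e2⟩|⟨e1,e2⟩|⟨e1,e2⟩|⟨e1,e2⟩
      · rcases s with _ | t
        · simp only [hA0, hu0] at e1 e2
          right; right; left
          refine ⟨by rw [hA1, hu1]; linarith, by rw [hu1]; linarith⟩
        · exfalso
          apply hx
          obtain ⟨c, hc⟩ := hupar t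
          exact ⟨c - u (t+1) + e - c, by omega⟩
      · rcases s with _ | t
        · simp only [hA0, hu0] at e1 e2
          right; right; right
          refine ⟨by rw [hA1, hu1]; linarith, by rw [hu1]; linarith⟩
        · exfalso
          apply hx
          obtain ⟨c, hc⟩ := hupar t
          exact ⟨e + c, by omega⟩
      · right; right; left
        constructor
        · rw [A_succ, u_succ_A, hxe]; linarith
        · rw [u_succ_A]; linarith
      · right; right; right
        constructor
        · rw [A_succ, u_succ_A, hxe]; linarith
        · rw [u_succ_A]; linarith

end RN

namespace RN

lemma pow_case {m : ℕ} (hm : 1 ≤ m) {s : ℕ} (h : (m:ℤ)^2 + (m:ℤ) + 2 = 2^s) :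
    m = 1 ∨ m = 2 ∨ m = 5 ∨ m = 90 := by
  have hN : ((m:ℤ))^2 + (m:ℤ)*1 + 2*1^2 = 2^s := by linarith
  have hprim : ¬((2:ℤ) ∣ (m:ℤ) ∧ (2:ℤ) ∣ (1:ℤ)) := by
    rintro ⟨_, h2⟩
    norm_num at h2
  have hu : u s = 1 ∨ u s = -1 := by
    rcases descent s (m:ℤ) 1 hN hprim with ⟨_,e2⟩|⟨_,e2⟩|⟨_,e2⟩|⟨_,e2⟩ <;> omega
  have hmZ : (1:ℤ) ≤ (m:ℤ) := by exact_mod_cast hm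
  have hs : s = 2 ∨ s = 3 ∨ s = 5 ∨ s = 13 := by
    rcases hu with h1 | h1
    · rcases u_eq_one h1 with rfl | rfl
      · exfalso
        have : (2:ℤ)^1 = 2 := by norm_num
        nlinarith
      · left; rfl
    · rcases u_neg_one h1 with rfl | rfl | rfl <;> tauto
  rcases hs with rfl | rfl | rfl | rfl
  · left
    have h4 : ((m:ℤ) - 1) * ((m:ℤ) + 2) = 0 := by nlinarith
    rcases mul_eq_zero.1 h4 with h' | h' <;> omega
  · right; left
    have h4 : ((m:ℤ) - 2) * ((m:ℤ) + 3) = 0 := by nlinarith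
    rcases mul_eq_zero.1 h4 with h' | h' <;> omega
  · right; right; left
    have h4 : ((m:ℤ) - 5) * ((m:ℤ) + 6) = 0 := by nlinarith
    rcases mul_eq_zero.1 h4 with h' | h' <;> omega
  · right; right; right
    have h4 : ((m:ℤ) - 90) * ((m:ℤ) + 91) = 0 := by nlinarith
    rcases mul_eq_zero.1 h4 with h' | h' <;> omega

end RN

/-- The only positive integers `m` for which `1 + m + m(m-1)/2` is a power of `2` are
`m = 1, 2, 5, 90`. -/
theorem stmt11 (m : ℕ) (hm : 0 < m) :
    (∃ r : ℕ, 1 + m + m * (m - 1) / 2 = 2 ^ r) ↔ m = 1 ∨ m = 2 ∨ m = 5 ∨ m = 90 := by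
  constructor
  · rintro ⟨r, hr⟩
    have h2 : 2 ∣ m * (m - 1) := by
      rcases Nat.even_or_odd m with he | ho
      · exact Dvd.dvd.mul_right he.two_dvd _
      · obtain ⟨t, ht⟩ := ho
        have : 2 ∣ (m - 1) := by omega
        exact Dvd.dvd.mul_left this _
    obtain ⟨c, hc⟩ := h2
    rw [hc, Nat.mul_div_cancel_left c (by norm_num)] at hr
    have hZ : (m:ℤ)^2 + (m:ℤ) + 2 = 2^(r+1) := by
      have hcZ : (m:ℤ) * ((m:ℤ) - 1) = 2 * (c:ℤ) := by
        zify [hm] at hc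
        linarith
      have hrZ : (1:ℤ) + (m:ℤ) + (c:ℤ) = 2^r := by exact_mod_cast hr
      have : (2:ℤ)^(r+1) = 2 * 2^r := by ring
      rw [this, ← hrZ]
      nlinarith
    exact RN.pow_case hm hZ
  · rintro (rfl | rfl | rfl | rfl)
    · exact ⟨1, by norm_num⟩
    · exact ⟨2, by norm_num⟩
    · exact ⟨4, by norm_num⟩
    · exact ⟨12, by norm_num⟩
end

section
/- For every positive integer s, the set A = {s, s+1} is a perfect s-spanning set of the cyclic group Z/(2s²+2s+1)Z: every element of Z/(2s²+2s+1)Z can be written uniquely as λ_1·s + λ_2·(s+1) with integers λ_1, λ_2 satisfying |λ_1| + |λ_2| ≤ s. -/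
/-- `{s, s+1}` is a perfect `s`-spanning set of `ℤ/(2s²+2s+1)ℤ`: every element has a unique
representation `λ₁·s + λ₂·(s+1)` with `|λ₁| + |λ₂| ≤ s`. -/
theorem stmt14 (s : ℕ) (hs : 1 ≤ s) (g : ZMod (2 * s ^ 2 + 2 * s + 1)) :
    ∃! p : ℤ × ℤ, p.1.natAbs + p.2.natAbs ≤ s ∧
      p.1 • (s : ZMod (2 * s ^ 2 + 2 * s + 1)) +
        p.2 • ((s : ZMod (2 * s ^ 2 + 2 * s + 1)) + 1) = g := by
  haveI : NeZero (2 * s ^ 2 + 2 * s + 1) := ⟨by omega⟩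
  have hs1 : (1 : ℤ) ≤ (s : ℤ) := by exact_mod_cast hs
  have hq : ((s ^ 2 : ℕ) : ℤ) = (s : ℤ) ^ 2 := by push_cast; ring
  have hnc : ((2 * s ^ 2 + 2 * s + 1 : ℕ) : ℤ) = 2 * (s : ℤ) ^ 2 + 2 * s + 1 := by
    push_cast; ring
  -- balanced lifts
  have lift : ∀ x : ZMod (2 * s ^ 2 + 2 * s + 1), ∃ k : ℤ,
      ((k : ZMod (2 * s ^ 2 + 2 * s + 1)) = x ∧ |k| ≤ (s : ℤ) ^ 2 + s) := by
    intro x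
    have hv := ZMod.val_lt x
    by_cases hc : x.val ≤ s ^ 2 + s
    · refine ⟨(x.val : ℤ), ?_, ?_⟩
      · rw [Int.cast_natCast, ZMod.natCast_val, ZMod.cast_id]
      · rw [abs_le]; constructor <;> push_cast <;> omega
    · refine ⟨(x.val : ℤ) - ((2 * s ^ 2 + 2 * s + 1 : ℕ) : ℤ), ?_, ?_⟩
      · rw [Int.cast_sub, Int.cast_natCast, Int.cast_natCast, ZMod.natCast_self, sub_zero,
          ZMod.natCast_val, ZMod.cast_id]
      · rw [abs_le]; constructor <;> push_cast <;> omega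
  -- s is a unit mod n
  have hcopN : Nat.Coprime s (2 * s ^ 2 + 2 * s + 1) := by
    have h1 : 2 * s ^ 2 + 2 * s + 1 = 1 + s * (2 * s + 2) := by ring
    rw [h1]
    exact (Nat.coprime_add_mul_left_right s 1 (2 * s + 2)).2 (Nat.coprime_one_right s)
  obtain ⟨t, ht⟩ : ∃ t : ZMod (2 * s ^ 2 + 2 * s + 1),
      (s : ZMod (2 * s ^ 2 + 2 * s + 1)) * t = 1 := by
    refine ⟨((ZMod.unitOfCoprime s hcopN)⁻¹ : (ZMod (2 * s ^ 2 + 2 * s + 1))ˣ), ?_⟩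
    rw [← ZMod.coe_unitOfCoprime s hcopN, ← Units.val_mul, mul_inv_cancel, Units.val_one]
  set h : ZMod (2 * s ^ 2 + 2 * s + 1) :=
    g * ((s : ZMod (2 * s ^ 2 + 2 * s + 1)) + 1) * t with hh
  have hhs : h * (s : ZMod (2 * s ^ 2 + 2 * s + 1)) =
      g * ((s : ZMod (2 * s ^ 2 + 2 * s + 1)) + 1) := by
    rw [hh]
    calc g * ((s : ZMod (2 * s ^ 2 + 2 * s + 1)) + 1) * t * s
        = g * ((s : ZMod (2 * s ^ 2 + 2 * s + 1)) + 1) * (s * t) := by ring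
      _ = g * ((s : ZMod (2 * s ^ 2 + 2 * s + 1)) + 1) := by rw [ht, mul_one]
  obtain ⟨k, hk, hka⟩ := lift g
  obtain ⟨k', hk', hka'⟩ := lift h
  -- two divisibilities
  have hd1 : ((2 * s ^ 2 + 2 * s + 1 : ℕ) : ℤ) ∣ k * ((s : ℤ) + 1) - k' * s := by
    rw [← ZMod.intCast_zmod_eq_zero_iff_dvd]
    push_cast
    rw [hk, hk']
    linear_combination -hhs
  have hcop : IsCoprime ((2 * s ^ 2 + 2 * s + 1 : ℕ) : ℤ) (s : ℤ) :=
    ⟨1, -(2 * (s : ℤ) + 2), by push_cast; ring⟩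
  have hd2 : ((2 * s ^ 2 + 2 * s + 1 : ℕ) : ℤ) ∣ k * s + k' * ((s : ℤ) + 1) := by
    apply hcop.dvd_of_dvd_mul_right
    have h1 : (k * s + k' * ((s : ℤ) + 1)) * s =
        ((2 * s ^ 2 + 2 * s + 1 : ℕ) : ℤ) * k - (k * ((s : ℤ) + 1) - k' * s) * ((s : ℤ) + 1) := by
      rw [hnc]; ring
    rw [h1]
    exact dvd_sub (Dvd.intro k rfl) (Dvd.dvd.mul_right hd1 _)
  obtain ⟨a, ha⟩ := hd2
  obtain ⟨b, hb⟩ := hd1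
  have hne : ((2 * s ^ 2 + 2 * s + 1 : ℕ) : ℤ) ≠ 0 := by
    rw [hnc]; positivity
  -- exact representation over ℤ
  have hab : a * (s : ℤ) + b * ((s : ℤ) + 1) = k := by
    apply mul_left_cancel₀ hne
    linear_combination (-(s : ℤ)) * ha + (-(s : ℤ) - 1) * hb + (-k) * hnc
  -- bounds
  have habw : ∀ (c₁ c₂ : ℤ), |c₁| + |c₂| ≤ 2 * (s : ℤ) + 2 →
      |k * c₁ + k' * c₂| ≤ 2 * (s : ℤ) ^ 3 + 4 * s ^ 2 + 2 * s := by
    intro c₁ c₂ hc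
    have h1 : |k * c₁ + k' * c₂| ≤ |k| * |c₁| + |k'| * |c₂| := by
      calc |k * c₁ + k' * c₂| ≤ |k * c₁| + |k' * c₂| := abs_add_le _ _
        _ = |k| * |c₁| + |k'| * |c₂| := by rw [abs_mul, abs_mul]
    nlinarith [abs_nonneg k, abs_nonneg k', abs_nonneg c₁, abs_nonneg c₂,
      mul_nonneg (sub_nonneg.2 hka) (abs_nonneg c₁),
      mul_nonneg (sub_nonneg.2 hka') (abs_nonneg c₂)]
  have bnd : ∀ z w : ℤ, |w| ≤ 2 * (s : ℤ) ^ 3 + 4 * s ^ 2 + 2 * s →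
      ((2 * s ^ 2 + 2 * s + 1 : ℕ) : ℤ) * z = w → |z| ≤ s := by
    intro z w hw hzw
    by_contra hzc
    push_neg at hzc
    have h1 : |((2 * s ^ 2 + 2 * s + 1 : ℕ) : ℤ)| * |z| = |w| := by rw [← abs_mul, hzw]
    have h2 : |((2 * s ^ 2 + 2 * s + 1 : ℕ) : ℤ)| = 2 * (s : ℤ) ^ 2 + 2 * s + 1 := by
      rw [abs_of_nonneg (by rw [hnc]; positivity)]; exact hnc
    rw [h2] at h1
    have h3 : (s : ℤ) + 1 ≤ |z| := hzc
    nlinarith [abs_nonneg z, abs_nonneg w]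
  have hsum : |a + b| ≤ (s : ℤ) := by
    apply bnd _ (k * (2 * (s:ℤ) + 1) + k' * 1)
    · apply habw
      rw [show |(2 * (s:ℤ) + 1)| = 2 * (s:ℤ) + 1 from abs_of_nonneg (by positivity), abs_one]
      omega
    · linear_combination -ha - hb
  have hdiff : |a - b| ≤ (s : ℤ) := by
    apply bnd _ (k * (-1) + k' * (2 * (s:ℤ) + 1))
    · apply habw
      rw [abs_neg, abs_one,
        show |(2 * (s:ℤ) + 1)| = 2 * (s:ℤ) + 1 from abs_of_nonneg (by positivity)]
      omega
    · linear_combination hb - ha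
  have habn : a.natAbs + b.natAbs ≤ s := by
    rw [abs_le] at hsum hdiff
    omega
  -- the representation in ZMod
  have hgeq : (a : ZMod (2 * s ^ 2 + 2 * s + 1)) * (s : ZMod (2 * s ^ 2 + 2 * s + 1)) +
      (b : ZMod (2 * s ^ 2 + 2 * s + 1)) * ((s : ZMod (2 * s ^ 2 + 2 * s + 1)) + 1) = g := by
    have h1 : ((a * (s : ℤ) + b * ((s : ℤ) + 1) : ℤ) : ZMod (2 * s ^ 2 + 2 * s + 1)) =
        ((k : ℤ) : ZMod (2 * s ^ 2 + 2 * s + 1)) := by rw [hab]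
    rw [hk] at h1
    push_cast at h1
    exact h1
  refine ⟨(a, b), ⟨habn, ?_⟩, ?_⟩
  · simp only [zsmul_eq_mul]
    exact hgeq
  · rintro ⟨c, d⟩ ⟨hcd1, hcd2⟩
    have hcd1' : c.natAbs + d.natAbs ≤ s := hcd1
    simp only [zsmul_eq_mul] at hcd2
    -- the difference must be zero
    have hz : (((c - a) * (s : ℤ) + (d - b) * ((s : ℤ) + 1) : ℤ) :
        ZMod (2 * s ^ 2 + 2 * s + 1)) = 0 := by
      push_cast
      linear_combination hcd2 - hgeq
    have hdvd : ((2 * s ^ 2 + 2 * s + 1 : ℕ) : ℤ) ∣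
        (c - a) * (s : ℤ) + (d - b) * ((s : ℤ) + 1) :=
      (ZMod.intCast_zmod_eq_zero_iff_dvd _ _).1 hz
    -- abs bounds on entries
    have hc1 : |c| + |d| ≤ (s : ℤ) := by
      rw [Int.abs_eq_natAbs, Int.abs_eq_natAbs]; exact_mod_cast hcd1'
    have hc2 : |a| + |b| ≤ (s : ℤ) := by
      rw [Int.abs_eq_natAbs, Int.abs_eq_natAbs]; exact_mod_cast habn
    have htri1 : |c - a| ≤ |c| + |a| := by
      rw [sub_eq_add_neg]; exact (abs_add_le _ _).trans (by rw [abs_neg])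
    have htri2 : |d - b| ≤ |d| + |b| := by
      rw [sub_eq_add_neg]; exact (abs_add_le _ _).trans (by rw [abs_neg])
    have habs : |(c - a) * (s : ℤ) + (d - b) * ((s : ℤ) + 1)| ≤ 2 * (s : ℤ) ^ 2 + 2 * s := by
      have h1 : |(c - a) * (s : ℤ) + (d - b) * ((s : ℤ) + 1)| ≤
          |c - a| * (s : ℤ) + |d - b| * ((s : ℤ) + 1) := by
        calc |(c - a) * (s : ℤ) + (d - b) * ((s : ℤ) + 1)|
            ≤ |(c - a) * (s : ℤ)| + |(d - b) * ((s : ℤ) + 1)| := abs_add_le _ _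
          _ = |c - a| * |(s : ℤ)| + |d - b| * |(s : ℤ) + 1| := by rw [abs_mul, abs_mul]
          _ = |c - a| * (s : ℤ) + |d - b| * ((s : ℤ) + 1) := by
              rw [abs_of_nonneg (by positivity : (0:ℤ) ≤ (s:ℤ)),
                abs_of_nonneg (by positivity : (0:ℤ) ≤ (s:ℤ) + 1)]
      have hA : |c - a| + |d - b| ≤ 2 * (s : ℤ) := by linarith
      have hB : |d - b| ≤ 2 * (s : ℤ) := by linarith [abs_nonneg (c - a)]
      have hC := mul_le_mul_of_nonneg_right hA (by positivity : (0:ℤ) ≤ (s:ℤ))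
      calc |(c - a) * (s : ℤ) + (d - b) * ((s : ℤ) + 1)|
          ≤ |c - a| * (s : ℤ) + |d - b| * ((s : ℤ) + 1) := h1
        _ = (|c - a| + |d - b|) * (s : ℤ) + |d - b| := by ring
        _ ≤ 2 * (s : ℤ) * (s : ℤ) + 2 * (s : ℤ) := by linarith
        _ = 2 * (s : ℤ) ^ 2 + 2 * (s : ℤ) := by ring
    have hzero : (c - a) * (s : ℤ) + (d - b) * ((s : ℤ) + 1) = 0 := by
      apply Int.eq_zero_of_dvd_of_natAbs_lt_natAbs hdvd
      have h1 : (((c - a) * (s : ℤ) + (d - b) * ((s : ℤ) + 1)).natAbs : ℤ) ≤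
          ((2 * s ^ 2 + 2 * s : ℕ) : ℤ) := by
        rw [← Int.abs_eq_natAbs]; push_cast; exact habs
      have h2 : ((c - a) * (s : ℤ) + (d - b) * ((s : ℤ) + 1)).natAbs ≤ 2 * s ^ 2 + 2 * s := by
        exact_mod_cast h1
      rw [Int.natAbs_natCast]
      omega
    -- conclude the difference vanishes
    have he1 : d - b = -(c - a + (d - b)) * (s : ℤ) := by linear_combination hzero
    have he2 : c - a = (c - a + (d - b)) * ((s : ℤ) + 1) := by linear_combination -hzero
    have hcast : ((s : ℤ) + 1) = ((s + 1 : ℕ) : ℤ) := by push_cast; ring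
    by_cases hw0 : c - a + (d - b) = 0
    · have e1 : d - b = 0 := by rw [he1, hw0]; ring
      have e2 : c - a = 0 := by rw [he2, hw0]; ring
      have hca : c = a := by omega
      have hdb : d = b := by omega
      simp [hca, hdb]
    · exfalso
      have h0 : 0 < (c - a + (d - b)).natAbs := Int.natAbs_pos.2 hw0
      have m1 : s ≤ (d - b).natAbs := by
        rw [he1, Int.natAbs_mul, Int.natAbs_neg, Int.natAbs_natCast]
        exact Nat.le_mul_of_pos_left s h0
      have m2 : s + 1 ≤ (c - a).natAbs := by
        rw [he2, hcast, Int.natAbs_mul, Int.natAbs_natCast]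
        exact Nat.le_mul_of_pos_left (s + 1) h0
      omega
end

section
/- Let G be a finite abelian group with a subgroup H of index d such that G/H is cyclic. Then the union of the 'middle third' cosets of H — namely the preimage in G of {⌈(d+1)/3⌉, ..., ⌈(d+1)/3⌉ + ⌈(d-1)/3⌉ - 1} ⊆ Z/dZ ≅ G/H under the quotient map — is a sumfree set of size ⌈(d-1)/3⌉·|H|. Consequently μ(G,{2,1}) ≥ max over divisors d of the exponent of G of ⌈(d-1)/3⌉·(|G|/d). -/
open Finset

private lemma gcd_lcm_dvd_aux (d a b : ℕ) (hd : d ≠ 0) (ha : a ≠ 0) (hb : b ≠ 0) :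
    Nat.gcd d (Nat.lcm a b) ∣ Nat.lcm (Nat.gcd d a) (Nat.gcd d b) := by
  have hdpos := Nat.pos_of_ne_zero hd
  have hga : Nat.gcd d a ≠ 0 := (Nat.gcd_pos_of_pos_left _ hdpos).ne'
  have hgb : Nat.gcd d b ≠ 0 := (Nat.gcd_pos_of_pos_left _ hdpos).ne'
  have hab : Nat.lcm a b ≠ 0 := (Nat.lcm_pos (Nat.pos_of_ne_zero ha) (Nat.pos_of_ne_zero hb)).ne'
  have h1 : Nat.gcd d (Nat.lcm a b) ≠ 0 := (Nat.gcd_pos_of_pos_left _ hdpos).ne'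
  have h2 : Nat.lcm (Nat.gcd d a) (Nat.gcd d b) ≠ 0 :=
    (Nat.lcm_pos (Nat.pos_of_ne_zero hga) (Nat.pos_of_ne_zero hgb)).ne'
  rw [← Nat.factorization_le_iff_dvd h1 h2, Nat.factorization_gcd hd hab,
    Nat.factorization_lcm ha hb, Nat.factorization_lcm hga hgb,
    Nat.factorization_gcd hd ha, Nat.factorization_gcd hd hb, Finsupp.le_def]
  intro p
  simp only [Finsupp.inf_apply, Finsupp.sup_apply]
  omega

private lemma gcd_lcm_dvd_finset {ι : Type*} (s : Finset ι) (n : ι → ℕ) (d : ℕ) (hd : d ≠ 0)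
    (hn : ∀ i ∈ s, n i ≠ 0) :
    Nat.gcd d (s.lcm n) ∣ s.lcm (fun i => Nat.gcd d (n i)) ∧ s.lcm n ≠ 0 := by
  classical
  induction s using Finset.induction with
  | empty => simp
  | @insert i s hi ih =>
    have hni : n i ≠ 0 := hn i (Finset.mem_insert_self i s)
    obtain ⟨ih1, ih2⟩ := ih (fun j hj => hn j (Finset.mem_insert_of_mem hj))
    rw [Finset.lcm_insert, Finset.lcm_insert]
    constructor
    · refine (gcd_lcm_dvd_aux d (n i) (s.lcm n) hd hni ih2).trans ?_
      exact Nat.lcm_dvd (Nat.dvd_lcm_left _ _)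
        (ih1.trans (Nat.dvd_lcm_right _ _))
    · exact (Nat.lcm_pos (Nat.pos_of_ne_zero hni) (Nat.pos_of_ne_zero ih2)).ne'

private lemma stmt16_part1 {G : Type*} [AddCommGroup G] [Fintype G] [DecidableEq G]
    (n : ℕ) (hn : n = Fintype.card G) (d : ℕ) (hd : 0 < d) (φ : G →+ ZMod d)
    (hφ : Function.Surjective φ) (S : Set G)
    (hS : S = {g : G | ∃ j : ℕ, j < (d + 1) / 3 ∧ φ g = (((d + 3) / 3 + j : ℕ) : ZMod d)}) :
    (∀ a ∈ S, ∀ b ∈ S, a + b ∉ S) ∧ S.ncard = ((d + 1) / 3) * (n / d) := by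
  constructor
  · rintro a ha b hb hab
    rw [hS] at ha hb hab
    obtain ⟨j1, hj1, ha⟩ := ha
    obtain ⟨j2, hj2, hb⟩ := hb
    obtain ⟨j3, hj3, hab⟩ := hab
    rw [map_add, ha, hb, ← Nat.cast_add] at hab
    rw [ZMod.natCast_eq_natCast_iff] at hab
    have h : ((d + 3) / 3 + j1 + ((d + 3) / 3 + j2)) % d = ((d + 3) / 3 + j3) % d := hab
    have hB : ((d + 3) / 3 + j3) % d = (d + 3) / 3 + j3 := Nat.mod_eq_of_lt (by omega)
    rcases Nat.lt_or_ge ((d + 3) / 3 + j1 + ((d + 3) / 3 + j2)) d with h' | h'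
    · rw [Nat.mod_eq_of_lt h', hB] at h
      omega
    · have hA : ((d + 3) / 3 + j1 + ((d + 3) / 3 + j2)) % d
          = (d + 3) / 3 + j1 + ((d + 3) / 3 + j2) - d := by
        rw [Nat.mod_eq_sub_mod h', Nat.mod_eq_of_lt (by omega)]
      rw [hA, hB] at h
      omega
  · -- cardinality
    have hker : Nat.card G = d * Nat.card φ.ker := by
      have h := AddSubgroup.card_eq_card_quotient_mul_card_addSubgroup φ.ker
      rwa [Nat.card_congr (QuotientAddGroup.quotientKerEquivOfSurjective φ hφ).toEquiv,
        Nat.card_zmod] at h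
    have hnd : n / d = Nat.card φ.ker := by
      rw [hn, ← Nat.card_eq_fintype_card, hker, Nat.mul_div_cancel_left _ hd]
    have hfiber : ∀ b : ZMod d,
        (Finset.univ.filter (fun g : G => φ g = b)).card = Nat.card φ.ker := by
      intro b
      obtain ⟨g0, hg0⟩ := hφ b
      rw [← Fintype.card_subtype, Nat.card_eq_fintype_card]
      exact Fintype.card_congr
        { toFun := fun x => ⟨x.1 - g0, by
            have hx := x.2
            simp only [AddMonoidHom.mem_ker, map_sub, hx, hg0, sub_self]⟩
          invFun := fun y => ⟨y.1 + g0, by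
            have hy := y.2
            rw [AddMonoidHom.mem_ker] at hy
            rw [map_add, hy, hg0, zero_add]⟩
          left_inv := fun x => by ext; simp
          right_inv := fun y => by ext; simp }
    have hS' : S = ↑((Finset.range ((d + 1) / 3)).biUnion
        (fun j => Finset.univ.filter (fun g : G => φ g = (((d + 3) / 3 + j : ℕ) : ZMod d)))) := by
      rw [hS]
      ext g
      simp only [Set.mem_setOf_eq, Finset.coe_biUnion, Finset.mem_coe, Finset.mem_range,
        Set.mem_iUnion, Finset.mem_filter, Finset.mem_univ, true_and]
      tauto
    rw [hS', Set.ncard_coe_finset, Finset.card_biUnion, ]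
    · rw [Finset.sum_congr rfl (fun j _ => hfiber _), Finset.sum_const, Finset.card_range,
        smul_eq_mul, hnd]
    · intro j hj j' hj' hjj'
      rw [Finset.mem_coe, Finset.mem_range] at hj hj'
      simp only [Function.onFun, Finset.disjoint_left, Finset.mem_filter, Finset.mem_univ, true_and]
      rintro g h1 h2
      rw [h1] at h2
      rw [ZMod.natCast_eq_natCast_iff] at h2
      have h : ((d + 3) / 3 + j) % d = ((d + 3) / 3 + j') % d := h2
      rw [Nat.mod_eq_of_lt (by omega), Nat.mod_eq_of_lt (by omega)] at h
      omega

private lemma stmt16_surj {G : Type*} [AddCommGroup G] [Fintype G]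
    (d : ℕ) (hdvd : d ∣ AddMonoid.exponent G) (hd : 0 < d) :
    ∃ φ : G →+ ZMod d, Function.Surjective φ := by
  classical
  haveI : NeZero d := ⟨hd.ne'⟩
  obtain ⟨ι, hι, m, hm1, ⟨e⟩⟩ := AddCommGroup.equiv_directSum_zmod_of_finite' G
  have hm0 : ∀ i, m i ≠ 0 := fun i => by have := hm1 i; omega
  have hL : AddMonoid.exponent G ∣ (Finset.univ : Finset ι).lcm m := by
    apply AddMonoid.exponent_dvd_of_forall_nsmul_eq_zero
    intro g
    apply e.injective
    rw [map_nsmul, map_zero]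
    refine DFinsupp.ext fun i => ?_
    rw [DFinsupp.smul_apply, DFinsupp.zero_apply, nsmul_eq_mul,
      (CharP.cast_eq_zero_iff (ZMod (m i)) (m i) _).mpr (Finset.dvd_lcm (Finset.mem_univ i)),
      zero_mul]
  have hdL : d ∣ (Finset.univ : Finset ι).lcm m := hdvd.trans hL
  set c : ι → ZMod d := fun i => ((d / Nat.gcd d (m i) : ℕ) : ZMod d) with hc_def
  have hc : ∀ i, ((m i : ℤ)) • (c i) = 0 := by
    intro i
    have hgd := Nat.gcd_dvd_left d (m i)
    have hgn := Nat.gcd_dvd_right d (m i)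
    rw [natCast_zsmul, nsmul_eq_mul, ← Nat.cast_mul]
    rw [CharP.cast_eq_zero_iff (ZMod d) d]
    obtain ⟨a, ha⟩ := hgn
    exact ⟨a, by nth_rewrite 1 [ha]; rw [mul_comm (Nat.gcd d (m i)) a, mul_assoc, Nat.mul_div_cancel' hgd,
      mul_comm]⟩
  let f : DirectSum ι (fun i => ZMod (m i)) →+ ZMod d :=
    DirectSum.toAddMonoid (fun i => ZMod.lift (m i)
      ⟨(zmultiplesHom _) (c i), by simpa [zmultiplesHom_apply] using hc i⟩)
  have hval : ∀ i, f (DirectSum.of _ i 1) = c i := by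
    intro i
    rw [show f (DirectSum.of _ i 1) = ZMod.lift (m i)
        ⟨(zmultiplesHom _) (c i), by simpa [zmultiplesHom_apply] using hc i⟩ 1 from
      DirectSum.toAddMonoid_of _ i 1]
    rw [show (1 : ZMod (m i)) = ((1 : ℤ) : ZMod (m i)) by push_cast; rfl, ZMod.lift_coe]
    simp [zmultiplesHom_apply]
  have hrange : ∀ i, c i ∈ f.range := fun i => ⟨DirectSum.of _ i 1, hval i⟩
  have horder : ∀ i, addOrderOf (c i) = Nat.gcd d (m i) := by
    intro i
    have hgd := Nat.gcd_dvd_left d (m i)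
    rw [hc_def]
    rw [ZMod.addOrderOf_coe _ hd.ne']
    rw [Nat.gcd_eq_right (Nat.div_dvd_of_dvd hgd), Nat.div_div_self hgd hd.ne']
  have hexp : d ∣ AddMonoid.exponent f.range := by
    have hdvd_exp : ∀ i, Nat.gcd d (m i) ∣ AddMonoid.exponent f.range := by
      intro i
      have h1 := AddMonoid.addOrder_dvd_exponent (⟨c i, hrange i⟩ : f.range)
      rw [← addOrderOf_injective f.range.subtype
        (AddSubgroup.subtype_injective _) ⟨c i, hrange i⟩] at h1
      rw [← horder i]
      exact h1
    have hlcm : (Finset.univ : Finset ι).lcm (fun i => Nat.gcd d (m i))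
        ∣ AddMonoid.exponent f.range := Finset.lcm_dvd (fun i _ => hdvd_exp i)
    refine dvd_trans ?_ hlcm
    have h := (gcd_lcm_dvd_finset Finset.univ m d hd.ne' (fun i _ => hm0 i)).1
    rwa [Nat.gcd_eq_left hdL] at h
  have htop : f.range = ⊤ := by
    apply AddSubgroup.eq_top_of_card_eq
    rw [Nat.card_zmod]
    refine Nat.dvd_antisymm ?_ (hexp.trans AddGroup.exponent_dvd_nat_card)
    have h := AddSubgroup.card_addSubgroup_dvd_card f.range
    rwa [Nat.card_zmod] at h
  have hfs : Function.Surjective f := AddMonoidHom.range_eq_top.mp htop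
  exact ⟨f.comp e.toAddMonoidHom, by
    rw [AddMonoidHom.coe_comp]
    exact hfs.comp e.surjective⟩

/-- The 'middle third' of the cosets of a subgroup with cyclic quotient of order `d` is a
sumfree set of size `⌈(d-1)/3⌉·(n/d)`; consequently, for every divisor `d` of the exponent
of `G` there is a sumfree subset of size `⌈(d-1)/3⌉·(n/d)`. -/
theorem stmt16 {G : Type*} [AddCommGroup G] [Fintype G] [DecidableEq G]
    (n : ℕ) (hn : n = Fintype.card G) :
    (∀ (d : ℕ), 0 < d → ∀ φ : G →+ ZMod d, Function.Surjective φ →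
      ∀ S : Set G,
        S = {g : G | ∃ j : ℕ, j < (d + 1) / 3 ∧ φ g = (((d + 3) / 3 + j : ℕ) : ZMod d)} →
        (∀ a ∈ S, ∀ b ∈ S, a + b ∉ S) ∧ S.ncard = ((d + 1) / 3) * (n / d)) ∧
    (∀ d : ℕ, d ∣ AddMonoid.exponent G →
      ∃ A : Finset G, (∀ a ∈ A, ∀ b ∈ A, a + b ∉ A) ∧
        A.card = ((d + 1) / 3) * (n / d)) := by
  constructor
  · exact fun d hd φ hφ S hS => stmt16_part1 n hn d hd φ hφ S hS
  · intro d hdvd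
    have hd : 0 < d := by
      rcases Nat.eq_zero_or_pos d with h | h
      · exact absurd (h ▸ hdvd) (by
          intro h0
          exact AddMonoid.exponent_ne_zero_of_finite (Nat.eq_zero_of_zero_dvd h0))
      · exact h
    obtain ⟨φ, hφ⟩ := stmt16_surj d hdvd hd
    set S : Set G :=
      {g : G | ∃ j : ℕ, j < (d + 1) / 3 ∧ φ g = (((d + 3) / 3 + j : ℕ) : ZMod d)} with hS
    obtain ⟨hfree, hcard⟩ := stmt16_part1 n hn d hd φ hφ S hS
    have hfin : S.Finite := Set.toFinite S
    refine ⟨hfin.toFinset, ?_, ?_⟩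
    · intro a ha b hb hab
      rw [Set.Finite.mem_toFinset] at ha hb hab
      exact hfree a ha b hb hab
    · rw [← Set.ncard_eq_toFinset_card S hfin, hcard]
end

section
/- Let p be a prime, and let k > l ≥ 1 be integers with k - l not divisible by p. If A ⊆ Z/pZ is an arithmetic progression of size m with k·A ∩ l·A = ∅ (where jA denotes the j-fold sumset), then m ≤ ⌊(p-2)/(k+l)⌋ + 1. -/
open Finset Pointwise

lemma mem_hsum_ap {p : ℕ} (a b : ZMod p) (m : ℕ) (hm : 1 ≤ m) (A : Finset (ZMod p))
    (hA : A = (Finset.range m).image (fun i => a + (i : ℕ) • b)) :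
    ∀ n s : ℕ, s ≤ n * (m - 1) → ((n : ZMod p) * a + (s : ZMod p) * b) ∈ hsum n A := by
  intro n
  induction n with
  | zero =>
    intro s hs
    simp only [Nat.zero_mul, Nat.le_zero] at hs
    subst hs
    simp [hsum]
  | succ n ih =>
    intro s hs
    set i := min s (m - 1) with hi
    have hile : i ≤ s := min_le_left _ _
    have hi' : i ≤ m - 1 := min_le_right _ _
    have h1 : s - i ≤ n * (m - 1) := by
      rcases le_or_gt s (m - 1) with h | h
      · have : i = s := min_eq_left h
        omega
      · have : i = m - 1 := min_eq_right h.le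
        have hs' : s ≤ (n + 1) * (m - 1) := hs
        have : (n + 1) * (m - 1) = n * (m - 1) + (m - 1) := by ring
        omega
    have hmem : a + (i : ZMod p) * b ∈ A := by
      rw [hA]
      exact mem_image.mpr ⟨i, mem_range.mpr (by omega), by simp [nsmul_eq_mul]⟩
    have hrec := ih (s - i) h1
    have hadd : (a + (i : ZMod p) * b) + ((n : ZMod p) * a + ((s - i : ℕ) : ZMod p) * b)
        ∈ hsum (n + 1) A := add_mem_add hmem hrec
    convert hadd using 1
    have hcast : ((s - i : ℕ) : ZMod p) = (s : ZMod p) - (i : ZMod p) := Nat.cast_sub hile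
    rw [hcast]
    push_cast
    ring

/-- A `(k,l)`-sumfree arithmetic progression of size `m` in `ℤ/pℤ` (with `p` prime not
dividing `k - l`) satisfies `m ≤ ⌊(p-2)/(k+l)⌋ + 1`. -/
theorem stmt17 (p k l m : ℕ) (hp : p.Prime) (hl : 1 ≤ l) (hkl : l < k)
    (hpd : ¬ p ∣ (k - l)) (a b : ZMod p) (hb : b ≠ 0) (hm : 1 ≤ m) (hmp : m ≤ p)
    (A : Finset (ZMod p)) (hA : A = (Finset.range m).image (fun i => a + (i : ℕ) • b))
    (hdisj : Disjoint (hsum k A) (hsum l A)) :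
    m ≤ (p - 2) / (k + l) + 1 := by
  haveI := Fact.mk hp
  by_contra hcon
  push_neg at hcon
  have hp2 : 2 ≤ p := hp.two_le
  have hdiv : (p - 2) / (k + l) < m - 1 := by omega
  have hmul : p - 2 < (m - 1) * (k + l) :=
    (Nat.div_lt_iff_lt_mul (by omega)).mp hdiv
  have hbig : p ≤ (k + l) * (m - 1) + 1 := by
    have : (m - 1) * (k + l) = (k + l) * (m - 1) := by ring
    omega
  have hexp : (k + l) * (m - 1) = k * (m - 1) + l * (m - 1) := by ring
  set u : ZMod p := ((l : ZMod p) * a - (k : ZMod p) * a) * b⁻¹ with hu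
  have hub : u * b = (l : ZMod p) * a - (k : ZMod p) * a := by
    rw [hu, mul_assoc, inv_mul_cancel₀ hb, mul_one]
  have hval : u.val < p := ZMod.val_lt u
  have hval_cast : ((u.val : ℕ) : ZMod p) = u := ZMod.natCast_val u |>.trans (ZMod.cast_id _ _)
  rcases le_or_gt u.val (k * (m - 1)) with hc | hc
  · -- element k*a + u.val*b = l*a
    have h1 : ((k : ZMod p) * a + (u.val : ZMod p) * b) ∈ hsum k A :=
      mem_hsum_ap a b m hm A hA k u.val hc
    have h2 : ((k : ZMod p) * a + (u.val : ZMod p) * b) ∈ hsum l A := by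
      have heq : (k : ZMod p) * a + (u.val : ZMod p) * b
          = (l : ZMod p) * a + ((0 : ℕ) : ZMod p) * b := by
        rw [hval_cast, hub]
        push_cast
        ring
      rw [heq]
      exact mem_hsum_ap a b m hm A hA l 0 (Nat.zero_le _)
    exact Finset.disjoint_left.mp hdisj h1 h2
  · -- element l*a + (p - u.val)*b = k*a
    have hs' : p - u.val ≤ l * (m - 1) := by omega
    have h2 : ((l : ZMod p) * a + ((p - u.val : ℕ) : ZMod p) * b) ∈ hsum l A :=
      mem_hsum_ap a b m hm A hA l (p - u.val) hs'
    have h1 : ((l : ZMod p) * a + ((p - u.val : ℕ) : ZMod p) * b) ∈ hsum k A := by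
      have hcast2 : ((p - u.val : ℕ) : ZMod p) = -u := by
        have : ((p - u.val : ℕ) : ZMod p) = (p : ZMod p) - (u.val : ZMod p) :=
          Nat.cast_sub hval.le
        rw [this, hval_cast, ZMod.natCast_self, zero_sub]
      have heq : (l : ZMod p) * a + ((p - u.val : ℕ) : ZMod p) * b
          = (k : ZMod p) * a + ((0 : ℕ) : ZMod p) * b := by
        rw [hcast2]
        have : -u * b = -(u * b) := by ring
        rw [this, hub]
        push_cast
        ring
      rw [heq]
      exact mem_hsum_ap a b m hm A hA k 0 (Nat.zero_le _)
    exact Finset.disjoint_left.mp hdisj h1 h2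
end

section
/- For every finite abelian group G of order n and positive integer h, the h-critical number satisfies χ(G, h) ≥ max{(⌊(d-2)/h⌋ + 1)·(n/d) : d | n} + 1; that is, for each divisor d of n there exists a subset A of G of size (⌊(d-2)/h⌋ + 1)·(n/d) with hA ≠ G. -/
open Finset Pointwise

/-- Elements of an `h`-fold sumset satisfy subadditive bounds. -/
lemma hsum_le {G : Type*} [AddCommMonoid G] [DecidableEq G] (φ : G → ℕ)
    (hφ0 : φ 0 = 0) (hsub : ∀ x y, φ (x + y) ≤ φ x + φ y) (k : ℕ) (A : Finset G)
    (hA : ∀ a ∈ A, φ a ≤ k) :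
    ∀ h : ℕ, ∀ x ∈ hsum h A, φ x ≤ h * k := by
  intro h
  induction h with
  | zero => intro x hx; simp [hsum] at hx; simp [hx, hφ0]
  | succ m ih =>
      intro x hx
      rw [hsum, Finset.mem_add] at hx
      obtain ⟨a, ha, y, hy, rfl⟩ := hx
      calc φ (a + y) ≤ φ a + φ y := hsub a y
        _ ≤ k + m * k := Nat.add_le_add (hA a ha) (ih y hy)
        _ = (m + 1) * k := by ring

/-- Abstract construction lemma. -/
lemma main_aux {G : Type*} [AddCommGroup G] [Fintype G] [DecidableEq G]
    (h k : ℕ) (φ : G → ℕ)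
    (hφ0 : φ 0 = 0) (hsub : ∀ x y, φ (x + y) ≤ φ x + φ y)
    (hex : ∃ z, h * k < φ z) :
    hsum h (univ.filter (fun x => φ x ≤ k)) ≠ univ := by
  obtain ⟨z, hz⟩ := hex
  intro hcontra
  have hzmem : z ∈ hsum h (univ.filter (fun x => φ x ≤ k)) := by
    rw [hcontra]; exact mem_univ z
  have := hsum_le φ hφ0 hsub k _ (fun a ha => (mem_filter.mp ha).2) h z hzmem
  omega

/-- Factorization of a divisor of a product. -/
lemma exists_factor {ι : Type*} [DecidableEq ι] (n : ι → ℕ) :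
    ∀ (s : Finset ι) (d : ℕ), 0 < d → d ∣ ∏ i ∈ s, n i →
      ∃ f : ι → ℕ, (∀ i, f i ∣ n i) ∧ ∏ i ∈ s, f i = d := by
  intro s
  induction s using Finset.induction_on with
  | empty =>
      intro d hd hdvd
      simp only [Finset.prod_empty] at hdvd
      refine ⟨fun _ => 1, fun i => one_dvd _, ?_⟩
      simp [Nat.dvd_one.mp hdvd]
  | insert a s ha ih =>
      intro d hd hdvd
      rw [Finset.prod_insert ha] at hdvd
      set g := Nat.gcd d (n a) with hg
      have hgpos : 0 < g := Nat.gcd_pos_of_pos_left _ hd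
      have hgd : g ∣ d := Nat.gcd_dvd_left _ _
      have hgn : g ∣ n a := Nat.gcd_dvd_right _ _
      obtain ⟨d', hd'⟩ := hgd
      obtain ⟨a', ha'⟩ := hgn
      have hdg : d / g = d' := by rw [hd', Nat.mul_div_cancel_left _ hgpos]
      have hag : n a / g = a' := by rw [ha', Nat.mul_div_cancel_left _ hgpos]
      have hdvd' : d' ∣ a' * ∏ i ∈ s, n i := by
        have : g * d' ∣ g * (a' * ∏ i ∈ s, n i) := by
          rw [← hd', ← mul_assoc, ← ha']; exact hdvd
        exact (mul_dvd_mul_iff_left hgpos.ne').mp this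
      have hcop : Nat.Coprime d' a' := by
        have := Nat.coprime_div_gcd_div_gcd (m := d) (n := n a) hgpos
        rwa [← hg, hdg, hag] at this
      have hdvdP : d' ∣ ∏ i ∈ s, n i := hcop.dvd_of_dvd_mul_left hdvd'
      have hd'pos : 0 < d' := by
        rcases Nat.eq_zero_or_pos d' with h' | h'
        · exfalso; rw [h', Nat.mul_zero] at hd'; omega
        · exact h'
      obtain ⟨f, hf, hfprod⟩ := ih d' hd'pos hdvdP
      refine ⟨Function.update f a g, ?_, ?_⟩
      · intro i
        by_cases hi : i = a
        · subst hi; rw [Function.update_self, ha']; exact Dvd.intro _ rfl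
        · rw [Function.update_of_ne hi]; exact hf i
      · rw [Finset.prod_insert ha, Function.update_self,
          Finset.prod_congr rfl
            (fun i hi => Function.update_of_ne (by rintro rfl; exact ha hi) _ f),
          hfprod, hd']

/-- Fibers of `val % d` on `ZMod n` all have size `n / d`. -/
lemma zmod_fiber_card {n d t : ℕ} [NeZero n] (hdn : d ∣ n) (ht : t < d) :
    (univ.filter (fun a : ZMod n => a.val % d = t)).card = n / d := by
  have hn : 0 < n := Nat.pos_of_ne_zero (NeZero.ne n)
  have hdpos : 0 < d := Nat.pos_of_ne_zero (by rintro rfl; exact absurd ht (by omega))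
  rw [← Finset.card_range (n / d)]
  apply Finset.card_bij' (fun a _ => a.val / d) (fun q _ => ((t + d * q : ℕ) : ZMod n))
  · intro a ha
    rw [Finset.mem_range]
    exact Nat.div_lt_div_of_lt_of_dvd hdn (ZMod.val_lt a)
  · intro q hq
    rw [Finset.mem_range] at hq
    have hmul : d * (q + 1) ≤ d * (n / d) := Nat.mul_le_mul_left d hq
    rw [Nat.mul_div_cancel' hdn] at hmul
    have hsucc : d * (q + 1) = d * q + d := Nat.mul_succ d q
    have hlt : t + d * q < n := by omega
    rw [Finset.mem_filter]
    refine ⟨mem_univ _, ?_⟩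
    rw [ZMod.val_natCast_of_lt hlt, Nat.add_mul_mod_self_left, Nat.mod_eq_of_lt ht]
  · intro a ha
    rw [Finset.mem_filter] at ha
    have : t + d * (a.val / d) = a.val := by
      conv_rhs => rw [← Nat.mod_add_div a.val d, ha.2]
    rw [this, ZMod.natCast_val, ZMod.cast_id]
  · intro q hq
    rw [Finset.mem_range] at hq
    have hmul : d * (q + 1) ≤ d * (n / d) := Nat.mul_le_mul_left d hq
    rw [Nat.mul_div_cancel' hdn] at hmul
    have hsucc : d * (q + 1) = d * q + d := Nat.mul_succ d q
    have hlt : t + d * q < n := by omega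
    rw [ZMod.val_natCast_of_lt hlt, Nat.add_mul_div_left _ _ hdpos,
      Nat.div_eq_of_lt ht, Nat.zero_add]

/-- For each divisor `d` of `n = |G|` there is a subset of `G` of size
`(⌊(d-2)/h⌋ + 1)·(n/d)` whose `h`-fold sumset is not all of `G`; hence
`χ(G,h) ≥ max_{d ∣ n} (⌊(d-2)/h⌋ + 1)·(n/d) + 1`. -/
theorem stmt18 {G : Type*} [AddCommGroup G] [Fintype G] [DecidableEq G]
    (n h : ℕ) (hn : n = Fintype.card G) (hh : 1 ≤ h) :
    ∀ d : ℕ, d ∣ n → ∃ A : Finset G,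
      (A.card : ℤ) = (((d : ℤ) - 2) / (h : ℤ) + 1) * ((n / d : ℕ) : ℤ) ∧
      hsum h A ≠ Finset.univ := by
  intro d hd
  have hnpos : 0 < n := hn ▸ Fintype.card_pos
  have hdpos : 0 < d := Nat.pos_of_dvd_of_pos hd hnpos
  rcases Nat.lt_or_ge d 2 with hd1 | hd2
  · -- d = 1
    interval_cases d
    have h1 : (1 : ℤ) ≤ (h : ℤ) := by exact_mod_cast hh
    have hdiv : (-1 : ℤ) / (h : ℤ) = -1 := by
      calc (-1 : ℤ) / (h : ℤ) = (((h : ℤ) - 1) + (h : ℤ) * (-1)) / (h : ℤ) := by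
            congr 1; ring
        _ = ((h : ℤ) - 1) / (h : ℤ) + (-1) :=
            Int.add_mul_ediv_left _ _ (by omega : (h:ℤ) ≠ 0)
        _ = -1 := by
            rw [Int.ediv_eq_zero_of_lt (by omega) (by omega)]; ring
    refine ⟨∅, by push_cast [hdiv, Finset.card_empty]; ring, ?_⟩
    have hemp : hsum h (∅ : Finset G) = ∅ := by
      obtain ⟨m, rfl⟩ := Nat.exists_eq_succ_of_ne_zero (by omega : h ≠ 0)
      rw [hsum, Finset.empty_add]
    rw [hemp]
    intro hcontra
    exact absurd (hcontra ▸ Finset.mem_univ (0 : G)) (Finset.notMem_empty _)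
  · -- d ≥ 2
    set k := (d - 2) / h with hk
    have hkh : h * k ≤ d - 2 := by
      rw [hk, Nat.mul_comm]; exact Nat.div_mul_le_self _ _
    have hkk : k ≤ h * k := Nat.le_mul_of_pos_left k hh
    obtain ⟨ι, hι, nn, hnn, ⟨e⟩⟩ := AddCommGroup.equiv_directSum_zmod_of_finite' G
    classical
    set r := Fintype.card ι with hr
    set σ : Fin r ≃ ι := (Fintype.equivFin ι).symm with hσ
    set m : Fin r → ℕ := fun j => nn (σ j) with hmdef
    have hm : ∀ j, 1 < m j := fun j => hnn (σ j)
    haveI : ∀ j, NeZero (m j) := fun j => ⟨by have := hm j; omega⟩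
    let E₁ : G ≃+ ((i : ι) → ZMod (nn i)) := e.trans (DirectSum.addEquivProd _)
    let E₂ : ((i : ι) → ZMod (nn i)) ≃+ ((j : Fin r) → ZMod (m j)) :=
      { Equiv.piCongrLeft' (fun i => ZMod (nn i)) σ.symm with
        map_add' := fun x y => rfl }
    let E : G ≃+ ((j : Fin r) → ZMod (m j)) := E₁.trans E₂
    have hcardG : n = ∏ j, m j := by
      rw [hn, Fintype.card_congr E.toEquiv, Fintype.card_pi]
      exact Finset.prod_congr rfl (fun j _ => ZMod.card (m j))
    obtain ⟨dd, hdd, hddprod⟩ :=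
      exists_factor m Finset.univ d hdpos (by rw [← hcardG]; exact hd)
    have hddpos : ∀ j, 0 < dd j := by
      intro j
      rcases Nat.eq_zero_or_pos (dd j) with h' | h'
      · exfalso
        have h1 := hdd j
        rw [h'] at h1
        have := Nat.eq_zero_of_zero_dvd h1
        have := hm j
        omega
      · exact h'
    have hddle : ∀ j, dd j ≤ m j :=
      fun j => Nat.le_of_dvd (by have := hm j; omega) (hdd j)
    -- digits map and the weight function
    set dig : ((j : Fin r) → ZMod (m j)) → ((j : Fin r) → Fin (dd j)) :=
      fun x j => ⟨(x j).val % dd j, Nat.mod_lt _ (hddpos j)⟩ with hdig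
    set φ : G → ℕ := fun g => (finPiFinEquiv (dig (E g)) : ℕ) with hφ
    have hDd : (∏ j, dd j) = d := hddprod
    have hDpos : 0 < ∏ j, dd j := by rw [hDd]; omega
    -- φ 0 = 0
    have hφ0 : φ 0 = 0 := by
      show (finPiFinEquiv (dig (E 0)) : ℕ) = 0
      rw [map_zero, finPiFinEquiv_apply]
      apply Finset.sum_eq_zero
      intro j _
      have hdz : dig (0 : (j : Fin r) → ZMod (m j)) j = ⟨0, hddpos j⟩ := by
        simp only [hdig, Pi.zero_apply, ZMod.val_zero, Nat.zero_mod]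
      rw [hdz]
      simp
    -- subadditivity
    have hsub : ∀ x y : G, φ (x + y) ≤ φ x + φ y := by
      intro x y
      show (finPiFinEquiv (dig (E (x + y))) : ℕ) ≤
        (finPiFinEquiv (dig (E x)) : ℕ) + (finPiFinEquiv (dig (E y)) : ℕ)
      rw [map_add]
      simp only [finPiFinEquiv_apply]
      rw [← Finset.sum_add_distrib]
      apply Finset.sum_le_sum
      intro j _
      have hptwise : (dig (E x + E y) j : ℕ) ≤ (dig (E x) j : ℕ) + (dig (E y) j : ℕ) := by
        show ((E x + E y) j).val % dd j ≤ (E x j).val % dd j + (E y j).val % dd j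
        have happ : (E x + E y) j = E x j + E y j := rfl
        rw [happ, ZMod.val_add, Nat.mod_mod_of_dvd _ (hdd j), Nat.add_mod]
        exact Nat.mod_le _ _
      rw [← Nat.add_mul]
      exact Nat.mul_le_mul_right _ hptwise
    -- existence of an element with large φ
    have hex : ∃ z : G, h * k < φ z := by
      set f0 : (j : Fin r) → Fin (dd j) :=
        finPiFinEquiv.symm ⟨(∏ j, dd j) - 1, by omega⟩ with hf0
      set v : (j : Fin r) → ZMod (m j) := fun j => ((f0 j : ℕ) : ZMod (m j)) with hv
      have hdigv : dig v = f0 := by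
        funext j
        apply Fin.ext
        show (v j).val % dd j = (f0 j : ℕ)
        rw [show v j = ((f0 j : ℕ) : ZMod (m j)) from rfl,
          ZMod.val_natCast_of_lt (lt_of_lt_of_le (f0 j).isLt (hddle j))]
        exact Nat.mod_eq_of_lt (f0 j).isLt
      refine ⟨E.symm v, ?_⟩
      show h * k < (finPiFinEquiv (dig (E (E.symm v))) : ℕ)
      rw [AddEquiv.apply_symm_apply, hdigv, hf0, Equiv.apply_symm_apply]
      show h * k < (∏ j, dd j) - 1
      omega
    -- counting
    set c : ℕ := ∏ j, (m j / dd j) with hc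
    have hnc : n = d * c := by
      rw [hcardG, hc, ← hDd, ← Finset.prod_mul_distrib]
      exact Finset.prod_congr rfl (fun j _ => (Nat.mul_div_cancel' (hdd j)).symm)
    have hkd : k < ∏ j, dd j := by omega
    have hcount : (univ.filter (fun x : G => φ x ≤ k)).card = (k + 1) * c := by
      have h1 : (univ.filter (fun x : G => φ x ≤ k)).card =
          (univ.filter (fun v : (j : Fin r) → ZMod (m j) =>
            (finPiFinEquiv (dig v) : ℕ) ≤ k)).card := by
        apply Finset.card_equiv E.toEquiv
        intro x
        simp [hφ]
      rw [h1]
      set T : Finset ((j : Fin r) → Fin (dd j)) :=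
        univ.filter (fun f => (finPiFinEquiv f : ℕ) ≤ k) with hT
      have h2 : (univ.filter (fun v : (j : Fin r) → ZMod (m j) =>
          (finPiFinEquiv (dig v) : ℕ) ≤ k)).card = ∑ f ∈ T, c := by
        rw [Finset.card_eq_sum_card_fiberwise
          (f := dig) (t := T)
          (fun v hv => by
            rw [hT, Finset.mem_coe, Finset.mem_filter]
            exact ⟨mem_univ _, (Finset.mem_filter.mp (Finset.mem_coe.mp hv)).2⟩)]
        apply Finset.sum_congr rfl
        intro f hf
        rw [hT, Finset.mem_filter] at hf
        have h3 : Finset.filter (fun v => dig v = f)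
            (univ.filter (fun v : (j : Fin r) → ZMod (m j) =>
              (finPiFinEquiv (dig v) : ℕ) ≤ k)) =
            Fintype.piFinset (fun j =>
              univ.filter (fun a : ZMod (m j) => a.val % dd j = (f j : ℕ))) := by
          ext v
          rw [Finset.mem_filter, Finset.mem_filter, Fintype.mem_piFinset]
          constructor
          · rintro ⟨-, hvf⟩
            intro j
            rw [Finset.mem_filter]
            refine ⟨mem_univ _, ?_⟩
            have : (dig v j : ℕ) = (f j : ℕ) := by rw [hvf]
            exact this
          · intro hall
            have hvf : dig v = f := by
              funext j
              apply Fin.ext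
              exact (Finset.mem_filter.mp (hall j)).2
            refine ⟨⟨mem_univ _, ?_⟩, hvf⟩
            show (finPiFinEquiv (dig v) : ℕ) ≤ k
            rw [hvf]
            exact hf.2
        rw [h3, Fintype.card_piFinset, hc]
        exact Finset.prod_congr rfl
          (fun j _ => zmod_fiber_card (hdd j) (f j).isLt)
      rw [h2, Finset.sum_const, smul_eq_mul]
      congr 1
      -- T.card = k + 1
      have h4 : T.card = (univ.filter
          (fun mm : Fin (∏ j, dd j) => (mm : ℕ) ≤ k)).card := by
        apply Finset.card_equiv finPiFinEquiv
        intro f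
        rw [hT]
        simp
      rw [h4, ← Finset.card_range (k + 1)]
      refine Finset.card_bij'
        (s := univ.filter (fun mm : Fin (∏ j, dd j) => (mm : ℕ) ≤ k))
        (t := range (k + 1)) (fun mm _ => (mm : ℕ))
        (fun q hq => (⟨q, lt_of_lt_of_le (Finset.mem_range.mp hq)
          (by omega : k + 1 ≤ ∏ j, dd j)⟩ : Fin (∏ j, dd j))) ?_ ?_ ?_ ?_
      · intro mm hmm
        rw [Finset.mem_filter] at hmm
        simp only [Finset.mem_range]
        omega
      · intro q hq
        rw [Finset.mem_filter]
        exact ⟨mem_univ _, Nat.lt_succ_iff.mp (Finset.mem_range.mp hq)⟩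
      · intro mm hmm; rfl
      · intro q hq; rfl
    -- conclusion
    refine ⟨univ.filter (fun x : G => φ x ≤ k), ?_, main_aux h k φ hφ0 hsub hex⟩
    rw [hcount]
    have hcnd : c = n / d := by rw [hnc, Nat.mul_div_cancel_left _ hdpos]
    have hcast : ((d : ℤ) - 2) / (h : ℤ) = (k : ℤ) := by
      have hd2' : ((d : ℤ) - 2) = ((d - 2 : ℕ) : ℤ) := by
        have : (2 : ℕ) ≤ d := hd2
        push_cast [this]
        omega
      rw [hd2', hk, Int.natCast_ediv]
    rw [hcast, ← hcnd]
    push_cast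
    ring
end

section
/- For every finite abelian group G of order n, the 2-critical number is χ(G, 2) = ⌊n/2⌋ + 1; that is, every subset of G of size at least ⌊n/2⌋ + 1 satisfies A + A = G, and there exists a subset of size ⌊n/2⌋ with A + A ≠ G. -/
open Finset Pointwise

lemma fiber_card {G : Type*} [AddCommGroup G] [Fintype G] [DecidableEq G]
    (n : ℕ) (hn : n = Fintype.card G) :
    ∃ x : G, (Finset.univ.filter fun a => a + a = x).card = n % 2 := by
  by_cases hD : Function.Injective (fun a : G => a + a)
  · -- doubling bijective, n odd
    have hodd : n % 2 = 1 := by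
      rcases Nat.mod_two_eq_zero_or_one n with h | h
      · exfalso
        have hdvd : 2 ∣ Fintype.card G := by
          rw [← hn]; exact Nat.dvd_of_mod_eq_zero h
        obtain ⟨g, hg⟩ := exists_prime_addOrderOf_dvd_card 2 hdvd
        have hgne : g ≠ 0 := by
          intro h0; rw [h0, addOrderOf_zero] at hg; omega
        have hgg : g + g = (0:G) + 0 := by
          have := addOrderOf_nsmul_eq_zero g
          rw [hg] at this
          rw [add_zero]
          simpa [two_nsmul] using this
        exact hgne (hD hgg)
      · exact h
    refine ⟨0, ?_⟩
    have hbij : Function.Bijective (fun a : G => a + a) :=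
      Finite.injective_iff_bijective.mp hD
    obtain ⟨a, ha⟩ := hbij.2 0
    have heq : (Finset.univ.filter fun b : G => b + b = (0:G)) = {a} := by
      ext b
      simp only [Finset.mem_filter, Finset.mem_univ, true_and, Finset.mem_singleton]
      constructor
      · intro hb; exact hD (hb.trans ha.symm)
      · intro hb; rw [hb]; exact ha
    rw [heq, Finset.card_singleton, hodd]
  · -- doubling not surjective, n even
    have hsurj : ¬ Function.Surjective (fun a : G => a + a) := by
      intro hs
      exact hD (Finite.injective_iff_surjective.mpr hs)
    obtain ⟨x, hx⟩ := not_forall.mp hsurj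
    push_neg at hx
    have heven : n % 2 = 0 := by
      rw [Function.not_injective_iff] at hD
      obtain ⟨a, b, hab, hne⟩ := hD
      have h1 : a - b ≠ 0 := sub_ne_zero.mpr hne
      have h2 : (2 : ℕ) • (a - b) = 0 := by
        rw [two_nsmul, sub_add_sub_comm, hab, sub_self]
      have ho : addOrderOf (a - b) = 2 :=
        addOrderOf_eq_prime h2 h1
      have : 2 ∣ Fintype.card G := ho ▸ addOrderOf_dvd_card
      omega
    refine ⟨x, ?_⟩
    have heq : (Finset.univ.filter fun a : G => a + a = x) = ∅ := by
      ext a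
      simp only [Finset.mem_filter, Finset.mem_univ, true_and, Finset.notMem_empty,
        iff_false]
      exact hx a
    rw [heq, Finset.card_empty, heven]

/-- For a finite abelian group `G` of order `n`, the `2`-critical number is `⌊n/2⌋ + 1`:
every subset of size at least `⌊n/2⌋ + 1` has `A + A = G`, and some subset of size `⌊n/2⌋`
has `A + A ≠ G`. -/
theorem stmt19 {G : Type*} [AddCommGroup G] [Fintype G] [DecidableEq G]
    (n : ℕ) (hn : n = Fintype.card G) :
    (∀ A : Finset G, n / 2 + 1 ≤ A.card → A + A = Finset.univ) ∧
    (∃ A : Finset G, A.card = n / 2 ∧ A + A ≠ Finset.univ) := by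
  constructor
  · intro A hA
    apply Finset.eq_univ_of_forall
    intro g
    set B := A.image (fun a => g - a) with hB
    have hcardB : B.card = A.card := by
      exact Finset.card_image_of_injective _ sub_right_injective
    have hsum : A.card + B.card = (A ∪ B).card + (A ∩ B).card :=
      (Finset.card_union_add_card_inter A B).symm
    have hUB : (A ∪ B).card ≤ n := by
      rw [hn]; exact Finset.card_le_univ _
    have hint : (A ∩ B).Nonempty := by
      rw [← Finset.card_pos]
      omega
    obtain ⟨c, hc⟩ := hint
    rw [Finset.mem_inter] at hc
    obtain ⟨hcA, hcB⟩ := hc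
    rw [hB, Finset.mem_image] at hcB
    obtain ⟨a, haA, hac⟩ := hcB
    have : a + c = g := by rw [← hac]; abel
    rw [← this]
    exact Finset.add_mem_add haA hcA
  · obtain ⟨x, hx⟩ := fiber_card n hn
    set e := Fintype.equivFin G with he
    set A := Finset.univ.filter (fun a : G => e a < e (x - a)) with hA
    set B := Finset.univ.filter (fun a : G => e (x - a) < e a) with hBdef
    set F := Finset.univ.filter (fun a : G => a + a = x) with hF
    have hAB : A.card = B.card := by
      apply Finset.card_bij (fun a _ => x - a)
      · intro a ha
        rw [hA, Finset.mem_filter] at ha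
        rw [hBdef, Finset.mem_filter]
        refine ⟨Finset.mem_univ _, ?_⟩
        rw [sub_sub_cancel]
        exact ha.2
      · intro a _ b _ hab
        have := sub_right_injective hab
        exact this
      · intro b hb
        rw [hBdef, Finset.mem_filter] at hb
        refine ⟨x - b, ?_, by rw [sub_sub_cancel]⟩
        rw [hA, Finset.mem_filter]
        refine ⟨Finset.mem_univ _, ?_⟩
        rw [sub_sub_cancel]
        exact hb.2
    have hpart : A.card + B.card + F.card = n := by
      have hdisjAB : Disjoint A B := by
        rw [Finset.disjoint_filter]
        intro a _ h1 h2
        exact absurd h1 (not_lt.mpr h2.le)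
      have hdisjF : Disjoint (A ∪ B) F := by
        rw [Finset.disjoint_union_left]
        constructor <;>
        · rw [Finset.disjoint_filter]
          intro a _ h1 h2
          have : a = x - a := by
            rw [eq_sub_iff_add_eq]; exact h2
          rw [← this] at h1
          exact lt_irrefl _ h1
      have hunion : A ∪ B ∪ F = Finset.univ := by
        apply Finset.eq_univ_of_forall
        intro a
        simp only [hA, hBdef, hF, Finset.mem_union, Finset.mem_filter, Finset.mem_univ,
          true_and]
        rcases lt_trichotomy (e a) (e (x - a)) with h | h | h
        · exact Or.inl (Or.inl h)
        · refine Or.inr ?_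
          have : a = x - a := e.injective h
          rw [← eq_sub_iff_add_eq]; exact this
        · exact Or.inl (Or.inr h)
      have := Finset.card_union_of_disjoint hdisjAB
      have h2 := Finset.card_union_of_disjoint hdisjF
      rw [hunion] at h2
      rw [← this, ← h2, hn, Finset.card_univ]
    have hFcard : F.card = n % 2 := hx
    refine ⟨A, ?_, ?_⟩
    · omega
    · intro hcontra
      have hxmem : x ∈ A + A := hcontra ▸ Finset.mem_univ x
      rw [Finset.mem_add] at hxmem
      obtain ⟨a, ha, b, hb, hab⟩ := hxmem
      rw [hA, Finset.mem_filter] at ha hb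
      have hba : b = x - a := by rw [eq_sub_iff_add_eq, add_comm]; exact hab
      have hab' : a = x - b := by rw [eq_sub_iff_add_eq]; exact hab
      have h1 := ha.2
      have h2 := hb.2
      rw [← hba] at h1
      rw [← hab'] at h2
      exact lt_irrefl _ (h1.trans h2)
end
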